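/- arXiv:1601.03501 — 6 statements merged into one kernel-verified Lean document; each statement's English description precedes it below -/
import Mathlib

section
/- Let D : ℝ → ℝ be continuously differentiable with D' : ℝ → ℝ a bijection onto ℝ, and define ρ(v) = D((D')⁻¹(−v)) + v·(D')⁻¹(−v). Then D is strictly convex on ℝ if and only if ρ is strictly concave on ℝ. -/
/-!
For each `v`, the point `x v` with `D' (x v) = -v` is, by the strict tangent-line inequality, the
unique minimiser of `y ↦ D y + v * y`; hence `ρ` is a pointwise minimum of the affine functions
`v ↦ D y + v * y`, each attained at a different `v`, and is strictly concave. Conversely, the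
continuous injective `D'` is strictly monotone or strictly antitone; in the antitone case the same
argument applied to `-D` makes `ρ` strictly convex, which is incompatible with strict concavity.
-/

open Function Set

lemma StrictConvexOn.subsingleton_of_strictConcaveOn {𝕜 E β : Type*} [Field 𝕜] [LinearOrder 𝕜]
    [IsStrictOrderedRing 𝕜] [AddCommMonoid E] [Module 𝕜 E] [AddCommMonoid β] [PartialOrder β]
    [SMul 𝕜 β] {s : Set E} {f : E → β} (hf : StrictConvexOn 𝕜 s f) (hf' : StrictConcaveOn 𝕜 s f) :
    s.Subsingleton := by
  intro x hx y hy
  by_contra hxy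
  exact lt_asymm (hf.2 hx hy hxy one_half_pos one_half_pos (add_halves 1))
    (hf'.2 hx hy hxy one_half_pos one_half_pos (add_halves 1))

lemma StrictConcaveOn.neg_comp_neg {𝕜 E β : Type*} [Ring 𝕜] [PartialOrder 𝕜]
    [AddCommGroup E] [Module 𝕜 E] [AddCommGroup β] [PartialOrder β] [IsOrderedAddMonoid β]
    [Module 𝕜 β] {s : Set E} {f : E → β} (hf : StrictConcaveOn 𝕜 s f) :
    StrictConvexOn 𝕜 (-s) fun v => -f (-v) := by
  refine ⟨hf.1.neg, fun x hx y hy hxy a b ha hb hab => ?_⟩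
  have := hf.2 hx hy (neg_injective.ne hxy) ha hb hab
  simp only [smul_neg]
  rw [← neg_add, neg_lt_neg_iff]
  simpa only [smul_neg, neg_add] using this

lemma StrictConvexOn.add_deriv_mul_sub_lt {S : Set ℝ} {f : ℝ → ℝ} {x y : ℝ}
    (hf : StrictConvexOn ℝ S f) (hx : x ∈ S) (hy : y ∈ S) (hxy : x ≠ y)
    (hfd : DifferentiableAt ℝ f x) : f x + deriv f x * (y - x) < f y := by
  rcases hxy.lt_or_gt with hxy | hyx
  · have := hf.deriv_lt_slope hx hy hxy hfd
    rw [slope_def_field, lt_div_iff₀ (sub_pos.2 hxy)] at this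
    linarith
  · have := hf.slope_lt_deriv hy hx hyx hfd
    rw [slope_def_field, div_lt_iff₀ (sub_pos.2 hyx)] at this
    linarith

theorem StrictConvexOn.strictConcaveOn_legendre {f x : ℝ → ℝ} (hf : StrictConvexOn ℝ univ f)
    (hfd : Differentiable ℝ f) (hx : ∀ v, deriv f (x v) = -v) :
    StrictConcaveOn ℝ univ fun v => f (x v) + v * x v := by
  have support (v y : ℝ) (hy : y ≠ x v) : f (x v) + v * x v < f y + v * y := by
    have := hf.add_deriv_mul_sub_lt (mem_univ _) (mem_univ y) hy.symm (hfd _)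
    rw [hx] at this
    linarith
  have hinj : Injective x := fun v w h => neg_injective (by rw [← hx v, ← hx w, h])
  refine ⟨convex_univ, fun v₁ _ v₂ _ hv a b ha hb hab => ?_⟩
  set m := a • v₁ + b • v₂
  have hm : m ∈ openSegment ℝ v₁ v₂ := ⟨a, b, ha, hb, hab, rfl⟩
  have h₁ := support v₁ (x m) (hinj.ne fun h => hv (left_mem_openSegment_iff.1 (h ▸ hm)))
  have h₂ := support v₂ (x m) (hinj.ne fun h => hv (right_mem_openSegment_iff.1 (h ▸ hm)))
  calc a • (f (x v₁) + v₁ * x v₁) + b • (f (x v₂) + v₂ * x v₂)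
      < a • (f (x m) + v₁ * x m) + b • (f (x m) + v₂ * x m) := by
        simp only [smul_eq_mul]; gcongr
    _ = f (x m) + m * x m := by
        simp only [m, smul_eq_mul]; linear_combination (f (x m)) * hab

/-- If `D : ℝ → ℝ` is continuously differentiable with `D'` a bijection of `ℝ`,
and `ρ(v) = D((D')⁻¹(-v)) + v·(D')⁻¹(-v)`, then `D` is strictly convex on `ℝ` if and only if
`ρ` is strictly concave on `ℝ`. -/
theorem strictConvex_iff_dual_strictConcave
    (D : ℝ → ℝ) (hD : ContDiff ℝ 1 D)
    (hbij : Function.Bijective (deriv D))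
    (ρ : ℝ → ℝ)
    (hρ : ∀ v : ℝ, ρ v = D (Function.invFun (deriv D) (-v))
        + v * Function.invFun (deriv D) (-v)) :
    StrictConvexOn ℝ Set.univ D ↔ StrictConcaveOn ℝ Set.univ ρ := by
  set x : ℝ → ℝ := fun v => invFun (deriv D) (-v)
  have hx (v : ℝ) : deriv D (x v) = -v := invFun_eq (hbij.2 (-v))
  have hDd : Differentiable ℝ D := hD.differentiable one_ne_zero
  obtain rfl : ρ = fun v => D (x v) + v * x v := funext hρ
  refine ⟨fun hconv => hconv.strictConcaveOn_legendre hDd hx, fun hconc => ?_⟩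
  rcases (hD.continuous_deriv le_rfl).strictMono_of_inj hbij.1 with hmono | hanti
  · exact hmono.strictConvexOn_univ_of_deriv hD.continuous
  · have hnegD : StrictConvexOn ℝ univ (-D) :=
      (hanti.strictConcaveOn_univ_of_deriv hD.continuous).neg
    have hψ := hnegD.strictConcaveOn_legendre (x := fun w => x (-w)) hDd.neg
      fun w => by simp [deriv.neg', hx]
    -- the dual of `-D` is `w ↦ -ρ (-w)`
    have hconv : StrictConvexOn ℝ univ fun v => D (x v) + v * x v := by
      simpa [add_comm] using hψ.neg_comp_neg
    exact absurd (hconv.subsingleton_of_strictConcaveOn hconc trivial trivial) zero_ne_one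
end

section
/- Define q₀(x) = (N f_{T|X}(0|x))⁻¹ and r₀(x, m) = f_{M|T,X}(m|0,x) / (N f_{T|X}(1|x) f_{M|T,X}(m|1,x)). Then for every measurable function v : ℝ^{r₁} × ℝ^{r₂} → ℝ such that T·r₀(X,M)·v(X,M) and (1−T)·q₀(X)·v(X,M) are integrable, E[T · r₀(X, M) · v(X, M)] = E[(1 − T) · q₀(X) · v(X, M)]. -/
/-!
Both sides are integrals against the joint density `f(t, x, m)` over the treated (`t = 1`) and
control (`t = 0`) slices. The weights are chosen so that `f(1, x, m) r₀(x, m) = f(0, x, m) q₀(x)`: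
writing `f(t, x, m) = f_X(x) f_{T|X}(t|x) f_{M|T,X}(m|t,x)`, both products equal
`f_X(x) f_{M|T,X}(m|0,x) / N`. This holds wherever the slice masses `∫ f(t, x, m) dm` are finite
and positive, which is almost every `x` because `f` is a positive probability density.
-/

open MeasureTheory ProbabilityTheory

theorem integral_count_prod_bool {γ E : Type*} [MeasurableSpace γ] [NormedAddCommGroup E]
    [NormedSpace ℝ E] [CompleteSpace E] {ρ : Measure γ} [SFinite ρ] {h : Bool × γ → E}
    (hh : Integrable h (Measure.count.prod ρ)) :
    ∫ p, h p ∂(Measure.count.prod ρ) = ∫ z, h (true, z) ∂ρ + ∫ z, h (false, z) ∂ρ := by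
  rw [integral_prod h hh, integral_fintype hh.integral_prod_left]
  simp [add_comm]

theorem ae_integral_pos_of_integrable_prod {α β : Type*} [MeasurableSpace α] [MeasurableSpace β]
    {μ : Measure α} {ν : Measure β} [SFinite μ] [SFinite ν] [NeZero ν] {F : α × β → ℝ}
    (hF : Integrable F (μ.prod ν)) (hpos : ∀ p, 0 < F p) :
    ∀ᵐ x ∂μ, 0 < ∫ y, F (x, y) ∂ν := by
  filter_upwards [hF.prod_right_ae] with x hx
  have hsupp : Function.support (fun y => F (x, y)) = Set.univ :=
    Set.eq_univ_of_forall fun y => (hpos (x, y)).ne'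
  rw [integral_pos_iff_support_of_nonneg (fun y => (hpos (x, y)).le) hx, hsupp,
    Measure.measure_univ_pos]
  exact NeZero.ne ν

section DensityOfLaw

variable {Ω Y : Type*} [MeasurableSpace Ω] [MeasurableSpace Y] {P : Measure Ω} {μ : Measure Y}
  {φ : Ω → Y} {w : Y → ℝ}

theorem integral_comp_eq_integral_density_mul (hφ : AEMeasurable φ P) (hw : Measurable w)
    (hw0 : ∀ y, 0 ≤ w y) (hlaw : P.map φ = μ.withDensity fun y => ENNReal.ofReal (w y))
    {g : Y → ℝ} (hg : Measurable g) :
    ∫ ω, g (φ ω) ∂P = ∫ y, w y * g y ∂μ := by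
  rw [← integral_map hφ hg.aestronglyMeasurable, hlaw]
  exact (integral_withDensity_eq_integral_smul hw.real_toNNReal g).trans
    (by simp [NNReal.smul_def, hw0])

theorem integrable_density_mul_of_integrable_comp (hφ : AEMeasurable φ P) (hw : Measurable w)
    (hw0 : ∀ y, 0 ≤ w y) (hlaw : P.map φ = μ.withDensity fun y => ENNReal.ofReal (w y))
    {g : Y → ℝ} (hg : Measurable g) (hint : Integrable (fun ω => g (φ ω)) P) :
    Integrable (fun y => w y * g y) μ := by
  have hmap : Integrable g (P.map φ) := (integrable_map_measure hg.aestronglyMeasurable hφ).mpr hint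
  rw [hlaw] at hmap
  simpa [NNReal.smul_def, hw0] using
    (integrable_withDensity_iff_integrable_smul hw.real_toNNReal).mp hmap

theorem integrable_density_of_map_eq_withDensity [IsFiniteMeasure P] (hφ : AEMeasurable φ P)
    (hw : Measurable w) (hw0 : ∀ y, 0 ≤ w y)
    (hlaw : P.map φ = μ.withDensity fun y => ENNReal.ofReal (w y)) :
    Integrable w μ := by
  simpa using integrable_density_mul_of_integrable_comp hφ hw hw0 hlaw measurable_const
    (integrable_const (1 : ℝ))

end DensityOfLaw

theorem mul_balancing_weight_eq {a b A B : ℝ} (N : ℝ) (ha : a ≠ 0) (hA : 0 < A) (hB : 0 < B) :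
    a * ((b / B) / (N * (A / (A + B)) * (a / A))) = b * (N * (B / (A + B)))⁻¹ := by
  rcases eq_or_ne N 0 with rfl | hN
  · simp
  · field_simp

theorem integral_ite_eq_of_density_balance {Ω α : Type*} [MeasurableSpace Ω] [MeasurableSpace α]
    {P : Measure Ω} {ρ : Measure α} [SFinite ρ] {T : Ω → Bool} {Z : Ω → α}
    (hTZ : Measurable fun ω => (T ω, Z ω)) {f : Bool × α → ℝ} (hf : Measurable f)
    (hf0 : ∀ p, 0 ≤ f p)
    (hlaw : P.map (fun ω => (T ω, Z ω)) =
      (Measure.count.prod ρ).withDensity fun p => ENNReal.ofReal (f p))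
    {g₁ g₀ : α → ℝ} (hg₁ : Measurable g₁) (hg₀ : Measurable g₀)
    (hint₁ : Integrable (fun ω => if T ω then g₁ (Z ω) else 0) P)
    (hint₀ : Integrable (fun ω => if T ω then 0 else g₀ (Z ω)) P)
    (hbal : ∀ᵐ z ∂ρ, f (true, z) * g₁ z = f (false, z) * g₀ z) :
    ∫ ω, (if T ω then g₁ (Z ω) else 0) ∂P = ∫ ω, (if T ω then 0 else g₀ (Z ω)) ∂P := by
  have htreated : MeasurableSet {p : Bool × α | p.1} :=
    measurable_fst (measurableSet_singleton true)
  have hG₁ : Measurable fun p : Bool × α => if p.1 then g₁ p.2 else 0 :=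
    (hg₁.comp measurable_snd).ite htreated measurable_const
  have hG₀ : Measurable fun p : Bool × α => if p.1 then 0 else g₀ p.2 :=
    measurable_const.ite htreated (hg₀.comp measurable_snd)
  calc ∫ ω, (if T ω then g₁ (Z ω) else 0) ∂P
      = ∫ p, f p * (if p.1 then g₁ p.2 else 0) ∂(Measure.count.prod ρ) :=
        integral_comp_eq_integral_density_mul hTZ.aemeasurable hf hf0 hlaw hG₁
    _ = ∫ z, f (true, z) * g₁ z ∂ρ := by
        rw [integral_count_prod_bool (integrable_density_mul_of_integrable_comp hTZ.aemeasurable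
          hf hf0 hlaw hG₁ hint₁)]
        simp
    _ = ∫ z, f (false, z) * g₀ z ∂ρ := integral_congr_ae hbal
    _ = ∫ p, f p * (if p.1 then 0 else g₀ p.2) ∂(Measure.count.prod ρ) := by
        rw [integral_count_prod_bool (integrable_density_mul_of_integrable_comp hTZ.aemeasurable
          hf hf0 hlaw hG₀ hint₀)]
        simp
    _ = ∫ ω, (if T ω then 0 else g₀ (Z ω)) ∂P :=
        (integral_comp_eq_integral_density_mul hTZ.aemeasurable hf hf0 hlaw hG₀).symm

theorem covariate_balancing_identity_general
    {Ω : Type*} [MeasurableSpace Ω] (P : Measure Ω) [IsProbabilityMeasure P]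
    (r₁ r₂ : ℕ)
    (T : Ω → Bool) (X : Ω → (Fin r₁ → ℝ)) (M : Ω → (Fin r₂ → ℝ))
    (hT : Measurable T) (hX : Measurable X) (hM : Measurable M)
    -- the joint law of (T, X, M) has a strictly positive density f with respect to
    -- (counting measure on {0,1}) × Lebesgue × Lebesgue
    (f : Bool → (Fin r₁ → ℝ) → (Fin r₂ → ℝ) → ℝ)
    (hf_meas : Measurable (fun p : Bool × (Fin r₁ → ℝ) × (Fin r₂ → ℝ) => f p.1 p.2.1 p.2.2))
    (hf_pos : ∀ t x m, 0 < f t x m)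
    (hlaw : P.map (fun ω => (T ω, X ω, M ω)) =
      ((Measure.count : Measure Bool).prod
        ((volume : Measure (Fin r₁ → ℝ)).prod (volume : Measure (Fin r₂ → ℝ)))).withDensity
        (fun p => ENNReal.ofReal (f p.1 p.2.1 p.2.2)))
    (N : ℕ)
    -- conditional densities
    (fX : (Fin r₁ → ℝ) → ℝ)
    (hfX : ∀ x, fX x = (∫ m, f true x m) + (∫ m, f false x m))
    (fTX : Bool → (Fin r₁ → ℝ) → ℝ)
    (hfTX : ∀ t x, fTX t x = (∫ m, f t x m) / fX x)
    (fMTX : (Fin r₂ → ℝ) → Bool → (Fin r₁ → ℝ) → ℝ)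
    (hfMTX : ∀ m t x, fMTX m t x = f t x m / (∫ m', f t x m'))
    -- the weight functions
    (q₀ : (Fin r₁ → ℝ) → ℝ)
    (hq₀ : ∀ x, q₀ x = ((N : ℝ) * fTX false x)⁻¹)
    (r₀ : (Fin r₁ → ℝ) → (Fin r₂ → ℝ) → ℝ)
    (hr₀ : ∀ x m, r₀ x m = fMTX m false x / ((N : ℝ) * fTX true x * fMTX m true x))
    -- the test function
    (v : (Fin r₁ → ℝ) → (Fin r₂ → ℝ) → ℝ) (hv : Measurable (Function.uncurry v))
    (hint1 : Integrable (fun ω => if T ω then r₀ (X ω) (M ω) * v (X ω) (M ω) else 0) P)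
    (hint2 : Integrable (fun ω => if T ω then 0 else q₀ (X ω) * v (X ω) (M ω)) P) :
    ∫ ω, (if T ω then r₀ (X ω) (M ω) * v (X ω) (M ω) else 0) ∂P
      = ∫ ω, (if T ω then 0 else q₀ (X ω) * v (X ω) (M ω)) ∂P := by
  set ρ := (volume : Measure (Fin r₁ → ℝ)).prod (volume : Measure (Fin r₂ → ℝ))
  have hTXM : Measurable fun ω => (T ω, X ω, M ω) := hT.prodMk (hX.prodMk hM)
  have hf_slice : ∀ t, Measurable fun z : (Fin r₁ → ℝ) × (Fin r₂ → ℝ) => f t z.1 z.2 :=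
    fun t => hf_meas.comp measurable_prodMk_left
  have hmass_meas : ∀ t, Measurable fun x => ∫ m, f t x m :=
    fun t => (hf_slice t).stronglyMeasurable.integral_prod_right'.measurable
  have hmass_meas_fst : ∀ t, Measurable fun z : (Fin r₁ → ℝ) × (Fin r₂ → ℝ) => ∫ m, f t z.1 m :=
    fun t => (hmass_meas t).comp measurable_fst
  have hq₀_meas : Measurable q₀ := by
    simp only [funext hq₀, hfTX, hfX]
    fun_prop
  have hr₀_meas : Measurable fun z : (Fin r₁ → ℝ) × (Fin r₂ → ℝ) => r₀ z.1 z.2 := by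
    simp only [hr₀, hfMTX, hfTX, hfX]
    fun_prop
  have hdens : Integrable (fun p : Bool × _ => f p.1 p.2.1 p.2.2) (Measure.count.prod ρ) :=
    integrable_density_of_map_eq_withDensity hTXM.aemeasurable hf_meas
      (fun p => (hf_pos _ _ _).le) hlaw
  have hmass_pos : ∀ t, ∀ᵐ x, 0 < ∫ m, f t x m := fun t =>
    ae_integral_pos_of_integrable_prod (Measure.ae_count_iff.mp hdens.prod_right_ae t)
      (fun z => hf_pos t z.1 z.2)
  have hbal : ∀ᵐ z ∂ρ,
      f true z.1 z.2 * (r₀ z.1 z.2 * v z.1 z.2) = f false z.1 z.2 * (q₀ z.1 * v z.1 z.2) := by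
    filter_upwards [Measure.quasiMeasurePreserving_fst.ae ((hmass_pos true).and (hmass_pos false))]
      with z ⟨hA, hB⟩
    rw [hr₀, hq₀, hfMTX, hfMTX, hfTX, hfTX, hfX, ← mul_assoc, ← mul_assoc,
      mul_balancing_weight_eq _ (hf_pos _ _ _).ne' hA hB]
  exact integral_ite_eq_of_density_balance (Z := fun ω => (X ω, M ω)) hTXM hf_meas
    (fun p => (hf_pos _ _ _).le) hlaw (hr₀_meas.mul hv) ((hq₀_meas.comp measurable_fst).mul hv)
    hint1 hint2 hbal

/-- Lemma 1 of the paper: with `q₀(x) = (N f_{T|X}(0|x))⁻¹` and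
`r₀(x,m) = f_{M|T,X}(m|0,x) / (N f_{T|X}(1|x) f_{M|T,X}(m|1,x))`, for every measurable `v`
with the displayed integrability,
`E[T · r₀(X,M) · v(X,M)] = E[(1−T) · q₀(X) · v(X,M)]`. -/
theorem covariate_balancing_identity
    {Ω : Type*} [MeasurableSpace Ω] (P : Measure Ω) [IsProbabilityMeasure P]
    (r₁ r₂ : ℕ)
    (T : Ω → Bool) (X : Ω → (Fin r₁ → ℝ)) (M : Ω → (Fin r₂ → ℝ))
    (hT : Measurable T) (hX : Measurable X) (hM : Measurable M)
    -- the joint law of (T, X, M) has a strictly positive density f with respect to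
    -- (counting measure on {0,1}) × Lebesgue × Lebesgue
    (f : Bool → (Fin r₁ → ℝ) → (Fin r₂ → ℝ) → ℝ)
    (hf_meas : Measurable (fun p : Bool × (Fin r₁ → ℝ) × (Fin r₂ → ℝ) => f p.1 p.2.1 p.2.2))
    (hf_pos : ∀ t x m, 0 < f t x m)
    (hlaw : P.map (fun ω => (T ω, X ω, M ω)) =
      ((Measure.count : Measure Bool).prod
        ((volume : Measure (Fin r₁ → ℝ)).prod (volume : Measure (Fin r₂ → ℝ)))).withDensity
        (fun p => ENNReal.ofReal (f p.1 p.2.1 p.2.2)))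
    (N : ℕ) (hN : 0 < N)
    -- conditional densities
    (fX : (Fin r₁ → ℝ) → ℝ)
    (hfX : ∀ x, fX x = (∫ m, f true x m) + (∫ m, f false x m))
    (fTX : Bool → (Fin r₁ → ℝ) → ℝ)
    (hfTX : ∀ t x, fTX t x = (∫ m, f t x m) / fX x)
    (fMTX : (Fin r₂ → ℝ) → Bool → (Fin r₁ → ℝ) → ℝ)
    (hfMTX : ∀ m t x, fMTX m t x = f t x m / (∫ m', f t x m'))
    -- the weight functions
    (q₀ : (Fin r₁ → ℝ) → ℝ)
    (hq₀ : ∀ x, q₀ x = ((N : ℝ) * fTX false x)⁻¹)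
    (r₀ : (Fin r₁ → ℝ) → (Fin r₂ → ℝ) → ℝ)
    (hr₀ : ∀ x m, r₀ x m = fMTX m false x / ((N : ℝ) * fTX true x * fMTX m true x))
    -- the test function
    (v : (Fin r₁ → ℝ) → (Fin r₂ → ℝ) → ℝ) (hv : Measurable (Function.uncurry v))
    (hint1 : Integrable (fun ω => if T ω then r₀ (X ω) (M ω) * v (X ω) (M ω) else 0) P)
    (hint2 : Integrable (fun ω => if T ω then 0 else q₀ (X ω) * v (X ω) (M ω)) P) :
    ∫ ω, (if T ω then r₀ (X ω) (M ω) * v (X ω) (M ω) else 0) ∂P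
      = ∫ ω, (if T ω then 0 else q₀ (X ω) * v (X ω) (M ω)) ∂P :=
  covariate_balancing_identity_general P r₁ r₂ T X M hT hX hM f hf_meas hf_pos hlaw N fX hfX fTX
    hfTX fMTX hfMTX q₀ hq₀ r₀ hr₀ v hv hint1 hint2
end

section
/- Let g : ℝ^{r₁} × ℝ^{r₂} → ℝ be a measurable version of the regression function of Y on (X, M) in the treated group, i.e. E[1{T=1} Y h(X, M)] = E[1{T=1} g(X, M) h(X, M)] for every bounded measurable h, and assume Y is integrable and the displayed expectations exist. Then the weighted mean of the outcome among the treated equals the mediation functional: E[ T · Y · f_{M|T,X}(M|0,X) / ( f_{T|X}(1|X) · f_{M|T,X}(M|1,X) ) ] = ∫_ℳ ∫_𝒳 g(x, m) f_{M|T,X}(m|0,x) f_X(x) dx dm. -/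
open MeasureTheory ProbabilityTheory
open scoped NNReal ENNReal

section MedHelpers
variable {β : Type*} [MeasurableSpace β] {μ : Measure β}

private lemma count_bool_eq :
    (Measure.count : Measure Bool) = Measure.dirac true + Measure.dirac false := by
  rw [Measure.count, Measure.sum_fintype]
  simp [Fintype.sum_bool]

private lemma lintegral_count_bool_prod [SFinite μ] {F : Bool × β → ℝ≥0∞} (hF : Measurable F) :
    ∫⁻ q, F q ∂((Measure.count : Measure Bool).prod μ)
      = (∫⁻ b, F (true, b) ∂μ) + ∫⁻ b, F (false, b) ∂μ := by
  rw [count_bool_eq, Measure.add_prod, lintegral_add_measure, Measure.dirac_prod,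
    Measure.dirac_prod, lintegral_map hF measurable_prodMk_left,
    lintegral_map hF measurable_prodMk_left]

private lemma integrable_count_bool_prod [SFinite μ] {F : Bool × β → ℝ} (hF : Measurable F)
    (h1 : Integrable (fun b => F (true, b)) μ) (h2 : Integrable (fun b => F (false, b)) μ) :
    Integrable F ((Measure.count : Measure Bool).prod μ) := by
  refine ⟨hF.aestronglyMeasurable, ?_⟩
  have key : ∫⁻ q, (‖F q‖₊ : ℝ≥0∞) ∂((Measure.count : Measure Bool).prod μ)
      = (∫⁻ b, (‖F (true, b)‖₊ : ℝ≥0∞) ∂μ) + ∫⁻ b, (‖F (false, b)‖₊ : ℝ≥0∞) ∂μ :=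
    lintegral_count_bool_prod (by exact hF.nnnorm.coe_nnreal_ennreal)
  have : (∫⁻ q, (‖F q‖₊ : ℝ≥0∞) ∂((Measure.count : Measure Bool).prod μ)) < ⊤ := by
    rw [key]
    exact ENNReal.add_lt_top.2 ⟨h1.hasFiniteIntegral, h2.hasFiniteIntegral⟩
  exact this

private lemma integral_count_bool_prod [SFinite μ] {F : Bool × β → ℝ} (hF : Measurable F)
    (h1 : Integrable (fun b => F (true, b)) μ) (h2 : Integrable (fun b => F (false, b)) μ) :
    ∫ q, F q ∂((Measure.count : Measure Bool).prod μ)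
      = (∫ b, F (true, b) ∂μ) + ∫ b, F (false, b) ∂μ := by
  have hd : ∀ t : Bool, ∫ q, F q ∂((Measure.dirac t).prod μ) = ∫ b, F (t, b) ∂μ := by
    intro t
    rw [Measure.dirac_prod, integral_map measurable_prodMk_left.aemeasurable
      hF.aestronglyMeasurable]
  have hi : ∀ t : Bool, Integrable (fun b => F (t, b)) μ →
      Integrable F ((Measure.dirac t).prod μ) := by
    intro t ht
    rw [Measure.dirac_prod]
    exact (integrable_map_measure hF.aestronglyMeasurable
      measurable_prodMk_left.aemeasurable).2 ht
  rw [count_bool_eq, Measure.add_prod, integral_add_measure (hi true h1) (hi false h2),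
    hd true, hd false]

variable {r₁ r₂ : ℕ}

/-- the weight `w(x,m) = f_{M|T,X}(m|0,x) / (f_{T|X}(1|x) f_{M|T,X}(m|1,x))` in raw form. -/
private noncomputable def Waux (f : Bool → (Fin r₁ → ℝ) → (Fin r₂ → ℝ) → ℝ)
    (p : (Fin r₁ → ℝ) × (Fin r₂ → ℝ)) : ℝ :=
  f false p.1 p.2 / (∫ m', f false p.1 m') /
    ((∫ m, f true p.1 m) / ((∫ m, f true p.1 m) + ∫ m, f false p.1 m) *
      (f true p.1 p.2 / ∫ m', f true p.1 m'))

/-- the integrand `g(x,m) f_{M|T,X}(m|0,x) f_X(x)` in raw form, on `(x,m)` pairs. -/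
private noncomputable def Daux (f : Bool → (Fin r₁ → ℝ) → (Fin r₂ → ℝ) → ℝ)
    (g : (Fin r₁ → ℝ) → (Fin r₂ → ℝ) → ℝ) (p : (Fin r₁ → ℝ) × (Fin r₂ → ℝ)) : ℝ :=
  g p.1 p.2 * (f false p.1 p.2 / ∫ m', f false p.1 m') *
    ((∫ m, f true p.1 m) + ∫ m, f false p.1 m)

/-- same on `(m,x)` pairs. -/
private noncomputable def Eaux (f : Bool → (Fin r₁ → ℝ) → (Fin r₂ → ℝ) → ℝ)
    (g : (Fin r₁ → ℝ) → (Fin r₂ → ℝ) → ℝ) (q : (Fin r₂ → ℝ) × (Fin r₁ → ℝ)) : ℝ :=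
  g q.2 q.1 * (f false q.2 q.1 / ∫ m', f false q.2 m') *
    ((∫ m, f true q.2 m) + ∫ m, f false q.2 m)

end MedHelpers

/-- if `g` is a version of the regression function of `Y` on `(X,M)` in the
treated group, then the weighted mean of the outcome among the treated equals the mediation
functional:
`E[T·Y·f_{M|T,X}(M|0,X)/(f_{T|X}(1|X) f_{M|T,X}(M|1,X))] = ∫_ℳ∫_𝒳 g(x,m) f_{M|T,X}(m|0,x) f_X(x) dx dm`. -/
theorem weighted_treated_mean_eq_mediation_functional
    {Ω : Type*} [MeasurableSpace Ω] (P : Measure Ω) [IsProbabilityMeasure P]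
    (r₁ r₂ : ℕ)
    (T : Ω → Bool) (X : Ω → (Fin r₁ → ℝ)) (M : Ω → (Fin r₂ → ℝ)) (Y : Ω → ℝ)
    (hT : Measurable T) (hX : Measurable X) (hM : Measurable M) (hY : Measurable Y)
    (hYint : Integrable Y P)
    -- supports
    (𝒳 : Set (Fin r₁ → ℝ)) (ℳ : Set (Fin r₂ → ℝ))
    (h𝒳 : MeasurableSet 𝒳) (hℳ : MeasurableSet ℳ)
    -- the joint law of (T, X, M) has a strictly positive density f supported on
    -- {0,1} × 𝒳 × ℳ, with respect to (counting measure on {0,1}) × Lebesgue × Lebesgue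
    (f : Bool → (Fin r₁ → ℝ) → (Fin r₂ → ℝ) → ℝ)
    (hf_meas : Measurable (fun p : Bool × (Fin r₁ → ℝ) × (Fin r₂ → ℝ) => f p.1 p.2.1 p.2.2))
    (hf_pos : ∀ t : Bool, ∀ x ∈ 𝒳, ∀ m ∈ ℳ, 0 < f t x m)
    (hf_supp : ∀ t x m, f t x m ≠ 0 → x ∈ 𝒳 ∧ m ∈ ℳ)
    (hlaw : P.map (fun ω => (T ω, X ω, M ω)) =
      ((Measure.count : Measure Bool).prod
        ((volume : Measure (Fin r₁ → ℝ)).prod (volume : Measure (Fin r₂ → ℝ)))).withDensity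
        (fun p => ENNReal.ofReal (f p.1 p.2.1 p.2.2)))
    -- conditional densities
    (fX : (Fin r₁ → ℝ) → ℝ)
    (hfX : ∀ x, fX x = (∫ m, f true x m) + (∫ m, f false x m))
    (fTX : Bool → (Fin r₁ → ℝ) → ℝ)
    (hfTX : ∀ t x, fTX t x = (∫ m, f t x m) / fX x)
    (fMTX : (Fin r₂ → ℝ) → Bool → (Fin r₁ → ℝ) → ℝ)
    (hfMTX : ∀ m t x, fMTX m t x = f t x m / (∫ m', f t x m'))
    -- g is a measurable version of the regression function of Y on (X,M) among the treated
    (g : (Fin r₁ → ℝ) → (Fin r₂ → ℝ) → ℝ) (hg : Measurable (Function.uncurry g))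
    (hreg : ∀ h : (Fin r₁ → ℝ) × (Fin r₂ → ℝ) → ℝ, Measurable h → (∃ C, ∀ p, |h p| ≤ C) →
      ∫ ω, (if T ω then Y ω * h (X ω, M ω) else 0) ∂P
        = ∫ ω, (if T ω then g (X ω) (M ω) * h (X ω, M ω) else 0) ∂P)
    -- existence of the displayed expectations
    (hint1 : Integrable (fun ω =>
      if T ω then Y ω * fMTX (M ω) false (X ω) / (fTX true (X ω) * fMTX (M ω) true (X ω))
      else 0) P)
    (hint2 : IntegrableOn (fun p : (Fin r₂ → ℝ) × (Fin r₁ → ℝ) =>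
        g p.2 p.1 * fMTX p.1 false p.2 * fX p.2) (ℳ ×ˢ 𝒳)
      ((volume : Measure (Fin r₂ → ℝ)).prod (volume : Measure (Fin r₁ → ℝ)))) :
    ∫ ω, (if T ω then
        Y ω * fMTX (M ω) false (X ω) / (fTX true (X ω) * fMTX (M ω) true (X ω))
      else 0) ∂P
      = ∫ m in ℳ, ∫ x in 𝒳, g x m * fMTX m false x * fX x := by
  classical
  simp only [hfMTX, hfTX, hfX, mul_div_assoc] at hint1 hint2 ⊢
  -- notation
  set μxm : Measure ((Fin r₁ → ℝ) × (Fin r₂ → ℝ)) :=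
    (volume : Measure (Fin r₁ → ℝ)).prod (volume : Measure (Fin r₂ → ℝ)) with hμxm
  set μmx : Measure ((Fin r₂ → ℝ) × (Fin r₁ → ℝ)) :=
    (volume : Measure (Fin r₂ → ℝ)).prod (volume : Measure (Fin r₁ → ℝ)) with hμmx
  set ν : Measure (Bool × ((Fin r₁ → ℝ) × (Fin r₂ → ℝ))) :=
    (Measure.count : Measure Bool).prod μxm with hν
  -- basic nonnegativity
  have hf0 : ∀ t x m, 0 ≤ f t x m := by
    intro t x m
    by_cases h : f t x m = 0
    · exact h.ge
    · exact (hf_pos t x (hf_supp t x m h).1 m (hf_supp t x m h).2).le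
  have hf_zero : ∀ t x m, ¬(x ∈ 𝒳 ∧ m ∈ ℳ) → f t x m = 0 := by
    intro t x m hxm
    by_contra h
    exact hxm (hf_supp t x m h)
  -- measurability of slices and integrals
  have hfm : ∀ t : Bool, Measurable (fun p : (Fin r₁ → ℝ) × (Fin r₂ → ℝ) => f t p.1 p.2) :=
    fun t => hf_meas.comp (measurable_const.prodMk measurable_id)
  have hfsl : ∀ t x, Measurable (fun m => f t x m) :=
    fun t x => (hfm t).comp (measurable_const.prodMk measurable_id)
  have hI : ∀ t : Bool, Measurable (fun x => ∫ m, f t x m) := by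
    intro t
    exact ((hfm t).stronglyMeasurable.integral_prod_right').measurable
  have hI0 : ∀ t x, 0 ≤ ∫ m, f t x m := fun t x => integral_nonneg (fun m => hf0 t x m)
  have hW_meas : Measurable (Waux f) := by
    unfold Waux
    exact ((hfm false).div ((hI false).comp measurable_fst)).div
      ((((hI true).comp measurable_fst).div
        (((hI true).comp measurable_fst).add ((hI false).comp measurable_fst))).mul
        ((hfm true).div ((hI true).comp measurable_fst)))
  have hW0 : ∀ p, 0 ≤ Waux f p := by
    intro p
    unfold Waux
    exact div_nonneg (div_nonneg (hf0 _ _ _) (hI0 _ _))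
      (mul_nonneg (div_nonneg (hI0 _ _) (add_nonneg (hI0 _ _) (hI0 _ _)))
        (div_nonneg (hf0 _ _ _) (hI0 _ _)))
  have hD_meas : Measurable (Daux f g) := by
    unfold Daux
    exact ((hg.mul ((hfm false).div ((hI false).comp measurable_fst))).mul
      (((hI true).comp measurable_fst).add ((hI false).comp measurable_fst)))
  have hE_meas : Measurable (Eaux f g) := by
    exact hD_meas.comp measurable_swap
  -- total mass
  have hTXM : Measurable fun ω => (T ω, X ω, M ω) := hT.prodMk (hX.prodMk hM)
  have hfq_meas : Measurable
      (fun q : Bool × ((Fin r₁ → ℝ) × (Fin r₂ → ℝ)) => f q.1 q.2.1 q.2.2) := hf_meas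
  have hmass : ∫⁻ q, ENNReal.ofReal (f q.1 q.2.1 q.2.2) ∂ν = 1 := by
    have hprob : IsProbabilityMeasure (P.map fun ω => (T ω, X ω, M ω)) :=
      Measure.isProbabilityMeasure_map hTXM.aemeasurable
    have h1 : (P.map fun ω => (T ω, X ω, M ω)) Set.univ = 1 := measure_univ
    rw [hlaw, withDensity_apply _ MeasurableSet.univ, Measure.restrict_univ] at h1
    exact h1
  have hmass_t : ∀ t : Bool,
      (∫⁻ p : (Fin r₁ → ℝ) × (Fin r₂ → ℝ), ENNReal.ofReal (f t p.1 p.2) ∂μxm) ≤ 1 := by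
    intro t
    rw [← hmass, lintegral_count_bool_prod (by exact hf_meas.ennreal_ofReal)]
    cases t
    · exact le_add_self
    · exact self_le_add_right _ _
  -- ℳ is not null
  have hMne : (volume : Measure (Fin r₂ → ℝ)) ℳ ≠ 0 := by
    intro h0
    have hnull : ν (Set.univ ×ˢ (Set.univ ×ˢ ℳ)) = 0 := by
      rw [hν, Measure.prod_prod, hμxm, Measure.prod_prod, h0, mul_zero, mul_zero]
    have hz : ∫⁻ q, ENNReal.ofReal (f q.1 q.2.1 q.2.2) ∂ν = 0 := by
      rw [lintegral_eq_zero_iff (by exact hf_meas.ennreal_ofReal)]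
      refine ae_iff.2 (measure_mono_null (fun q hq => ?_) hnull)
      refine ⟨trivial, trivial, ?_⟩
      by_contra hm
      have hzero : f q.1 q.2.1 q.2.2 = 0 := hf_zero _ _ _ (fun h => hm h.2)
      exact hq (by simp [Pi.zero_apply, hzero])
    exact zero_ne_one (hz.symm.trans hmass)
  -- a.e. integrability of slices
  have hfin : ∀ t : Bool, ∀ᵐ x ∂(volume : Measure (Fin r₁ → ℝ)),
      (∫⁻ m, ENNReal.ofReal (f t x m)) < ⊤ := by
    intro t
    have hmeas2 : Measurable fun p : (Fin r₁ → ℝ) × (Fin r₂ → ℝ) =>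
        ENNReal.ofReal (f t p.1 p.2) := (hfm t).ennreal_ofReal
    have hlt : (∫⁻ x, ∫⁻ m, ENNReal.ofReal (f t x m)) ≠ ⊤ := by
      rw [← lintegral_prod _ hmeas2.aemeasurable]
      exact (lt_of_le_of_lt (hmass_t t) ENNReal.one_lt_top).ne
    exact ae_lt_top (hmeas2.lintegral_prod_right') hlt
  have hSint : ∀ (t : Bool) (x), (∫⁻ m, ENNReal.ofReal (f t x m)) < ⊤ →
      Integrable (fun m => f t x m) (volume : Measure (Fin r₂ → ℝ)) := by
    intro t x hlt
    refine ⟨(hfsl t x).aestronglyMeasurable, ?_⟩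
    have heq : (∫⁻ m, (‖f t x m‖₊ : ℝ≥0∞)) = ∫⁻ m, ENNReal.ofReal (f t x m) :=
      lintegral_congr fun m => Real.enorm_eq_ofReal (hf0 t x m)
    show (∫⁻ m, (‖f t x m‖₊ : ℝ≥0∞)) < ⊤
    rw [heq]
    exact hlt
  -- positivity of slice integrals on the support
  have hIpos : ∀ (t : Bool) (x), x ∈ 𝒳 → Integrable (fun m => f t x m) volume →
      0 < ∫ m, f t x m := by
    intro t x hx hint
    have heq : ∫ m, f t x m = ∫ m in ℳ, f t x m := by
      rw [← integral_indicator hℳ]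
      refine integral_congr_ae (Filter.Eventually.of_forall fun m => ?_)
      by_cases hm : m ∈ ℳ
      · simp [Set.indicator_of_mem hm]
      · simp [Set.indicator_of_notMem hm, hf_zero t x m (fun h => hm h.2)]
    rw [heq]
    refine (setIntegral_pos_iff_support_of_nonneg_ae
      (Filter.Eventually.of_forall fun m => hf0 t x m) hint.integrableOn).2 ?_
    have hsub : ℳ ⊆ Function.support (fun m => f t x m) ∩ ℳ :=
      fun m hm => ⟨(hf_pos t x hx m hm).ne', hm⟩
    exact lt_of_lt_of_le (pos_iff_ne_zero.2 hMne) (measure_mono hsub)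
  -- the good set
  set S : Set (Fin r₁ → ℝ) :=
    {x | (∫⁻ m, ENNReal.ofReal (f true x m)) < ⊤ ∧ (∫⁻ m, ENNReal.ofReal (f false x m)) < ⊤}
    with hS
  have hS_meas : MeasurableSet S := by
    have m1 : Measurable fun x => ∫⁻ m, ENNReal.ofReal (f true x m) :=
      Measurable.lintegral_prod_right' ((hfm true).ennreal_ofReal)
    have m2 : Measurable fun x => ∫⁻ m, ENNReal.ofReal (f false x m) :=
      Measurable.lintegral_prod_right' ((hfm false).ennreal_ofReal)
    exact (m1 measurableSet_Iio).inter (m2 measurableSet_Iio)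
  have hS_ae : ∀ᵐ x ∂(volume : Measure (Fin r₁ → ℝ)), x ∈ S :=
    (hfin true).and (hfin false)
  have hS_prod_ae : ∀ᵐ p ∂μxm, p.1 ∈ S := by
    have h0 : (volume : Measure (Fin r₁ → ℝ)) {x | ¬ x ∈ S} = 0 := ae_iff.1 hS_ae
    refine ae_iff.2 (measure_mono_null (t := {x | ¬ x ∈ S} ×ˢ Set.univ)
      (fun p hp => ⟨hp, trivial⟩) ?_)
    rw [hμxm, Measure.prod_prod, h0, zero_mul]
  -- key pointwise identity
  have hkey : ∀ x ∈ S, ∀ m, Waux f (x, m) * f true x m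
      = (f false x m / ∫ m', f false x m') * ((∫ m', f true x m') + ∫ m', f false x m') := by
    intro x hx m
    by_cases ha : f true x m = 0
    · have hb : f false x m = 0 := by
        by_contra hb
        exact (hf_pos true x (hf_supp false x m hb).1 m (hf_supp false x m hb).2).ne' ha
      simp [Waux, ha, hb]
    · obtain ⟨hx𝒳, hmℳ⟩ := hf_supp true x m ha
      have hA : 0 < ∫ m', f true x m' := hIpos true x hx𝒳 (hSint true x hx.1)
      have hB : 0 < ∫ m', f false x m' := hIpos false x hx𝒳 (hSint false x hx.2)
      have ha' : 0 < f true x m := hf_pos true x hx𝒳 m hmℳ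
      have hAB : (0:ℝ) < (∫ m', f true x m') + ∫ m', f false x m' := by linarith
      unfold Waux
      field_simp
  -- integrability of the target integrand
  have hEzero : ∀ q : (Fin r₂ → ℝ) × (Fin r₁ → ℝ), q ∉ ℳ ×ˢ 𝒳 → Eaux f g q = 0 := by
    intro q hq
    have hz : f false q.2 q.1 = 0 := hf_zero false q.2 q.1 (fun h => hq ⟨h.2, h.1⟩)
    simp [Eaux, hz]
  have hint2' : IntegrableOn (Eaux f g) (ℳ ×ˢ 𝒳) μmx := hint2
  have hindE : (ℳ ×ˢ 𝒳).indicator (Eaux f g) = Eaux f g := by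
    funext q
    by_cases hq : q ∈ ℳ ×ˢ 𝒳
    · rw [Set.indicator_of_mem hq]
    · rw [Set.indicator_of_notMem hq, hEzero q hq]
  have hEint : Integrable (Eaux f g) μmx := by
    rw [← hindE]
    exact (integrable_indicator_iff (hℳ.prod h𝒳)).2 hint2'
  have hDint : Integrable (Daux f g) μxm := by
    have hde : Daux f g = (Eaux f g) ∘ Prod.swap := rfl
    rw [hde]
    exact ((Measure.measurePreserving_swap).integrable_comp
      hEint.aestronglyMeasurable).2 hEint
  -- truncated weights
  have hwn_meas : ∀ n : ℕ, Measurable (fun p => min (Waux f p) (n : ℝ)) :=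
    fun n => hW_meas.min measurable_const
  have hwn_bdd : ∀ n : ℕ, ∀ p, |min (Waux f p) (n : ℝ)| ≤ (n : ℝ) := by
    intro n p
    rw [abs_of_nonneg (le_min (hW0 p) (Nat.cast_nonneg n))]
    exact min_le_right _ _
  have hwn_le : ∀ (n : ℕ) p, min (Waux f p) (n : ℝ) ≤ Waux f p := fun n p => min_le_left _ _
  have hwn0 : ∀ (n : ℕ) p, 0 ≤ min (Waux f p) (n : ℝ) :=
    fun n p => le_min (hW0 p) (Nat.cast_nonneg n)
  have hwn_tendsto : ∀ p, Filter.Tendsto (fun n : ℕ => min (Waux f p) (n : ℝ))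
      Filter.atTop (nhds (Waux f p)) := by
    intro p
    refine tendsto_atTop_of_eventually_const (i₀ := Nat.ceil (Waux f p)) fun n hn => ?_
    exact min_eq_left ((Nat.le_ceil _).trans (Nat.cast_le.2 hn))
  -- step 1 : hreg applied to the truncated weight
  have step1 : ∀ n : ℕ,
      ∫ ω, (if T ω then Y ω * min (Waux f (X ω, M ω)) (n : ℝ) else 0) ∂P
        = ∫ ω, (if T ω then g (X ω) (M ω) * min (Waux f (X ω, M ω)) (n : ℝ) else 0) ∂P := by
    intro n
    exact hreg (fun p => min (Waux f p) (n : ℝ)) (hwn_meas n) ⟨n, hwn_bdd n⟩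
  -- the truncated product integrand on the product space
  have hC_meas : ∀ n : ℕ, Measurable (fun p : (Fin r₁ → ℝ) × (Fin r₂ → ℝ) =>
      f true p.1 p.2 * (g p.1 p.2 * min (Waux f p) (n : ℝ))) := by
    intro n
    exact (hfm true).mul (hg.mul (hwn_meas n))
  have hC_bound : ∀ n : ℕ, ∀ p : (Fin r₁ → ℝ) × (Fin r₂ → ℝ), p.1 ∈ S →
      ‖f true p.1 p.2 * (g p.1 p.2 * min (Waux f p) (n : ℝ))‖ ≤ |Daux f g p| := by
    intro n p hp
    have hkey2 : Waux f p * f true p.1 p.2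
        = (f false p.1 p.2 / ∫ m', f false p.1 m') *
          ((∫ m', f true p.1 m') + ∫ m', f false p.1 m') := hkey p.1 hp p.2
    have h1 : ‖f true p.1 p.2 * (g p.1 p.2 * min (Waux f p) (n : ℝ))‖
        = f true p.1 p.2 * min (Waux f p) (n : ℝ) * |g p.1 p.2| := by
      rw [Real.norm_eq_abs, abs_mul, abs_mul, abs_of_nonneg (hf0 _ _ _),
        abs_of_nonneg (hwn0 n p)]
      ring
    rw [h1]
    have h2 : f true p.1 p.2 * min (Waux f p) (n : ℝ) * |g p.1 p.2|
        ≤ f true p.1 p.2 * Waux f p * |g p.1 p.2| :=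
      mul_le_mul_of_nonneg_right
        (mul_le_mul_of_nonneg_left (hwn_le n p) (hf0 _ _ _)) (abs_nonneg _)
    refine h2.trans ?_
    have h3 : |Daux f g p| = (f false p.1 p.2 / ∫ m', f false p.1 m') *
        ((∫ m', f true p.1 m') + ∫ m', f false p.1 m') * |g p.1 p.2| := by
      unfold Daux
      rw [abs_mul, abs_mul, abs_of_nonneg (div_nonneg (hf0 _ _ _) (hI0 _ _)),
        abs_of_nonneg (add_nonneg (hI0 _ _) (hI0 _ _))]
      ring
    rw [h3, ← hkey2]
    exact le_of_eq (by ring)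
  have hC_int : ∀ n : ℕ, Integrable (fun p : (Fin r₁ → ℝ) × (Fin r₂ → ℝ) =>
      f true p.1 p.2 * (g p.1 p.2 * min (Waux f p) (n : ℝ))) μxm := by
    intro n
    refine Integrable.mono' hDint.abs ((hC_meas n).aestronglyMeasurable) ?_
    filter_upwards [hS_prod_ae] with p hp
    exact hC_bound n p hp
  -- step 2 : change of variables
  have step2 : ∀ n : ℕ,
      ∫ ω, (if T ω then g (X ω) (M ω) * min (Waux f (X ω, M ω)) (n : ℝ) else 0) ∂P
        = ∫ p : (Fin r₁ → ℝ) × (Fin r₂ → ℝ),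
            f true p.1 p.2 * (g p.1 p.2 * min (Waux f p) (n : ℝ)) ∂μxm := by
    intro n
    set Hn : Bool × ((Fin r₁ → ℝ) × (Fin r₂ → ℝ)) → ℝ :=
      fun q => if q.1 then g q.2.1 q.2.2 * min (Waux f q.2) (n : ℝ) else 0 with hHn
    have hHn_meas : Measurable Hn := by
      refine Measurable.ite (measurable_fst (measurableSet_singleton true)) ?_ measurable_const
      exact (hg.comp measurable_snd).mul ((hW_meas.comp measurable_snd).min measurable_const)
    have hΦ_meas : Measurable (fun q : Bool × ((Fin r₁ → ℝ) × (Fin r₂ → ℝ)) =>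
        if q.1 then f true q.2.1 q.2.2 * (g q.2.1 q.2.2 * min (Waux f q.2) (n : ℝ))
        else 0) := by
      refine Measurable.ite (measurable_fst (measurableSet_singleton true)) ?_ measurable_const
      exact ((hfm true).comp measurable_snd).mul
        ((hg.comp measurable_snd).mul ((hW_meas.comp measurable_snd).min measurable_const))
    have e2 : ∫ ω, Hn (T ω, X ω, M ω) ∂P
        = ∫ q, Hn q ∂(P.map fun ω => (T ω, X ω, M ω)) :=
      (integral_map hTXM.aemeasurable hHn_meas.aestronglyMeasurable).symm
    have e3 : ∫ q, Hn q ∂(P.map fun ω => (T ω, X ω, M ω))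
        = ∫ q, ((f q.1 q.2.1 q.2.2).toNNReal : ℝ≥0) • Hn q ∂ν := by
      rw [hlaw]
      exact integral_withDensity_eq_integral_smul (hf_meas.real_toNNReal) Hn
    have e4 : ∀ q : Bool × ((Fin r₁ → ℝ) × (Fin r₂ → ℝ)),
        ((f q.1 q.2.1 q.2.2).toNNReal : ℝ≥0) • Hn q
          = if q.1 then f true q.2.1 q.2.2 * (g q.2.1 q.2.2 * min (Waux f q.2) (n : ℝ))
            else 0 := by
      intro q
      have h0 := hf0 q.1 q.2.1 q.2.2
      rcases Bool.eq_false_or_eq_true q.1 with h | h <;>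
        rw [h] at h0 <;>
        simp [hHn, h, NNReal.smul_def, smul_eq_mul, Real.coe_toNNReal _ h0]
    have e5 : ∫ q : Bool × ((Fin r₁ → ℝ) × (Fin r₂ → ℝ)),
        (if q.1 then f true q.2.1 q.2.2 * (g q.2.1 q.2.2 * min (Waux f q.2) (n : ℝ))
          else 0) ∂ν
        = (∫ p : (Fin r₁ → ℝ) × (Fin r₂ → ℝ),
            f true p.1 p.2 * (g p.1 p.2 * min (Waux f p) (n : ℝ)) ∂μxm)
          + ∫ _p : (Fin r₁ → ℝ) × (Fin r₂ → ℝ), (0:ℝ) ∂μxm := by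
      refine integral_count_bool_prod hΦ_meas ?_ ?_
      · simpa using hC_int n
      · simp
    calc ∫ ω, (if T ω then g (X ω) (M ω) * min (Waux f (X ω, M ω)) (n : ℝ) else 0) ∂P
        = ∫ ω, Hn (T ω, X ω, M ω) ∂P := rfl
      _ = ∫ q, Hn q ∂(P.map fun ω => (T ω, X ω, M ω)) := e2
      _ = ∫ q, ((f q.1 q.2.1 q.2.2).toNNReal : ℝ≥0) • Hn q ∂ν := e3
      _ = ∫ q : Bool × ((Fin r₁ → ℝ) × (Fin r₂ → ℝ)),
            (if q.1 then f true q.2.1 q.2.2 * (g q.2.1 q.2.2 * min (Waux f q.2) (n : ℝ))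
              else 0) ∂ν := by
          exact integral_congr_ae (Filter.Eventually.of_forall e4)
      _ = (∫ p : (Fin r₁ → ℝ) × (Fin r₂ → ℝ),
            f true p.1 p.2 * (g p.1 p.2 * min (Waux f p) (n : ℝ)) ∂μxm)
          + ∫ _p : (Fin r₁ → ℝ) × (Fin r₂ → ℝ), (0:ℝ) ∂μxm := e5
      _ = ∫ p : (Fin r₁ → ℝ) × (Fin r₂ → ℝ),
            f true p.1 p.2 * (g p.1 p.2 * min (Waux f p) (n : ℝ)) ∂μxm := by
          simp
  -- step 3 : dominated convergence on the left
  have step3 : Filter.Tendsto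
      (fun n : ℕ => ∫ ω, (if T ω then Y ω * min (Waux f (X ω, M ω)) (n : ℝ) else 0) ∂P)
      Filter.atTop
      (nhds (∫ ω, (if T ω then Y ω * Waux f (X ω, M ω) else 0) ∂P)) := by
    have hbint : Integrable (fun ω => |if T ω then Y ω * Waux f (X ω, M ω) else 0|) P :=
      hint1.abs
    have hmeasn : ∀ n : ℕ, AEStronglyMeasurable
        (fun ω => if T ω then Y ω * min (Waux f (X ω, M ω)) (n : ℝ) else 0) P := by
      intro n
      refine (Measurable.ite (hT (measurableSet_singleton true)) ?_
        measurable_const).aestronglyMeasurable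
      exact hY.mul ((hW_meas.comp (hX.prodMk hM)).min measurable_const)
    refine tendsto_integral_of_dominated_convergence
      (fun ω => |if T ω then Y ω * Waux f (X ω, M ω) else 0|) hmeasn hbint ?_ ?_
    · intro n
      refine Filter.Eventually.of_forall fun ω => ?_
      by_cases h : T ω = true
      · simp only [if_pos h, Real.norm_eq_abs, abs_mul]
        refine mul_le_mul_of_nonneg_left ?_ (abs_nonneg _)
        rw [abs_of_nonneg (hwn0 n _), abs_of_nonneg (hW0 _)]
        exact hwn_le n _
      · simp [h]
    · refine Filter.Eventually.of_forall fun ω => ?_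
      by_cases h : T ω = true
      · simp only [if_pos h]
        exact (hwn_tendsto (X ω, M ω)).const_mul (Y ω)
      · simp only [if_neg h]
        exact tendsto_const_nhds
  -- step 4 : dominated convergence on the right
  have step4 : Filter.Tendsto
      (fun n : ℕ => ∫ p : (Fin r₁ → ℝ) × (Fin r₂ → ℝ),
          f true p.1 p.2 * (g p.1 p.2 * min (Waux f p) (n : ℝ)) ∂μxm)
      Filter.atTop (nhds (∫ p, Daux f g p ∂μxm)) := by
    refine tendsto_integral_of_dominated_convergence (fun p => |Daux f g p|)
      (fun n => (hC_meas n).aestronglyMeasurable) hDint.abs ?_ ?_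
    · intro n
      filter_upwards [hS_prod_ae] with p hp
      exact hC_bound n p hp
    · filter_upwards [hS_prod_ae] with p hp
      have hkey2 : Waux f p * f true p.1 p.2
          = (f false p.1 p.2 / ∫ m', f false p.1 m') *
            ((∫ m', f true p.1 m') + ∫ m', f false p.1 m') := hkey p.1 hp p.2
      have hDeq : Daux f g p = f true p.1 p.2 * (g p.1 p.2 * Waux f p) := by
        unfold Daux
        rw [mul_assoc, ← hkey2]
        ring
      rw [hDeq]
      exact ((hwn_tendsto p).const_mul (g p.1 p.2)).const_mul (f true p.1 p.2)
  -- step 5 : the final computation of the right-hand side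
  have step5 : ∫ p, Daux f g p ∂μxm = ∫ m in ℳ, ∫ x in 𝒳, Eaux f g (m, x) := by
    have h1 : ∫ p, Daux f g p ∂μxm = ∫ q, Eaux f g q ∂μmx := by
      have hswap : ∀ p : (Fin r₁ → ℝ) × (Fin r₂ → ℝ),
          Daux f g p = Eaux f g (Prod.swap p) := fun p => rfl
      calc ∫ p, Daux f g p ∂μxm = ∫ p, Eaux f g (Prod.swap p) ∂μxm := by
            exact integral_congr_ae (Filter.Eventually.of_forall fun p => hswap p)
        _ = ∫ q, Eaux f g q ∂(Measure.map Prod.swap μxm) :=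
            (integral_map measurable_swap.aemeasurable
              (by rw [hμxm, Measure.prod_swap]; exact hE_meas.aestronglyMeasurable)).symm
        _ = ∫ q, Eaux f g q ∂μmx := by rw [hμxm, Measure.prod_swap]
    have h2 : ∫ q, Eaux f g q ∂μmx = ∫ q in ℳ ×ˢ 𝒳, Eaux f g q ∂μmx := by
      rw [← integral_indicator (hℳ.prod h𝒳), hindE]
    have h3 : ∫ q in ℳ ×ˢ 𝒳, Eaux f g q ∂μmx = ∫ m in ℳ, ∫ x in 𝒳, Eaux f g (m, x) :=
      setIntegral_prod (Eaux f g) hint2'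
    rw [h1, h2, h3]
  -- combine
  have hfinal : (∫ ω, (if T ω then Y ω * Waux f (X ω, M ω) else 0) ∂P)
      = ∫ p, Daux f g p ∂μxm := by
    refine tendsto_nhds_unique ?_ step4
    have : (fun n : ℕ => ∫ ω, (if T ω then Y ω * min (Waux f (X ω, M ω)) (n : ℝ) else 0) ∂P)
        = fun n : ℕ => ∫ p : (Fin r₁ → ℝ) × (Fin r₂ → ℝ),
            f true p.1 p.2 * (g p.1 p.2 * min (Waux f p) (n : ℝ)) ∂μxm := by
      funext n; rw [step1 n, step2 n]
    rw [← this]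
    exact step3
  calc ∫ ω, (if T ω then
        Y ω * ((f false (X ω) (M ω) / ∫ m', f false (X ω) m') /
          ((∫ m, f true (X ω) m) / ((∫ m, f true (X ω) m) + ∫ m, f false (X ω) m) *
            (f true (X ω) (M ω) / ∫ m', f true (X ω) m'))) else 0) ∂P
      = ∫ ω, (if T ω then Y ω * Waux f (X ω, M ω) else 0) ∂P := rfl
    _ = ∫ p, Daux f g p ∂μxm := hfinal
    _ = ∫ m in ℳ, ∫ x in 𝒳, Eaux f g (m, x) := step5
    _ = ∫ m in ℳ, ∫ x in 𝒳,
          g x m * (f false x m / ∫ m', f false x m') *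
            ((∫ m_1, f true x m_1) + ∫ m_1, f false x m_1) := rfl
end

section
/- Define f_{T,M|X}(t, m | x) = f(t, x, m)/f_X(x). Then for every measurable function v : ℝ^{r₁} × ℝ^{r₂} → ℝ such that both sides below are integrable, E[ (1 − T) · ( f_{M|T,X}(M|1,X) / f_{T,M|X}(0, M | X) ) · v(X, M) ] = E[ T · v(X, M) / f_{T|X}(1|X) ]. -/
/-!
Both expectations are integrals of a function of `(T, X, M)`, hence integrals against the joint
density `f` on `Bool × 𝒳 × ℳ`. The weight is chosen so that
`f(0,x,m) · f_{M|T,X}(m|1,x) / f_{T,M|X}(0,m|x) = f(1,x,m) / f_{T|X}(1|x)`: the control integrand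
times the density at `t = 0` is the treated integrand times the density at `t = 1`. Flipping `t`
preserves counting measure on `Bool`, so the two integrals agree.
-/

open MeasureTheory ProbabilityTheory

theorem MeasurableEquiv.measurePreserving_count {α β : Type*} [MeasurableSpace α]
    [MeasurableSpace β] (e : α ≃ᵐ β) : MeasurePreserving e Measure.count Measure.count := by
  refine ⟨e.measurable, ?_⟩
  ext s hs
  rw [e.map_apply, Measure.count_apply hs, Measure.count_apply (e.measurable hs),
    ← e.image_symm, e.symm.injective.encard_image]

theorem integral_comp_not_fst_count_prod {Y : Type*} [MeasurableSpace Y] (ν : Measure Y)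
    [SFinite ν] (h : Bool × Y → ℝ) :
    ∫ p, h (!p.1, p.2) ∂(Measure.count.prod ν) = ∫ p, h p ∂(Measure.count.prod ν) :=
  let flip : Bool ≃ᵐ Bool := ⟨Equiv.boolNot, measurable_of_countable _, measurable_of_countable _⟩
  (flip.measurePreserving_count.prod (MeasurePreserving.id ν)).integral_comp'
    (f := flip.prodCongr (.refl Y)) h

theorem integral_comp_eq_integral_mul_of_map_eq_withDensity {Ω β : Type*} [MeasurableSpace Ω]
    [MeasurableSpace β] {P : Measure Ω} {Z : Ω → β} (hZ : AEMeasurable Z P) {μ : Measure β}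
    {ρ : β → ℝ} (hρ : Measurable ρ) (hρ_nonneg : ∀ b, 0 ≤ ρ b)
    (hlaw : P.map Z = μ.withDensity fun b => ENNReal.ofReal (ρ b)) {g : β → ℝ}
    (hg : Measurable g) :
    ∫ ω, g (Z ω) ∂P = ∫ b, ρ b * g b ∂μ := by
  rw [← integral_map hZ hg.aestronglyMeasurable, hlaw, integral_withDensity_eq_integral_toReal_smul
    hρ.ennreal_ofReal (ae_of_all _ fun _ => ENNReal.ofReal_lt_top)]
  simp only [ENNReal.toReal_ofReal (hρ_nonneg _), smul_eq_mul]

theorem control_weighting_identity_general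
    {Ω : Type*} [MeasurableSpace Ω] (P : Measure Ω)
    (r₁ r₂ : ℕ)
    (T : Ω → Bool) (X : Ω → (Fin r₁ → ℝ)) (M : Ω → (Fin r₂ → ℝ))
    (hT : Measurable T) (hX : Measurable X) (hM : Measurable M)
    (f : Bool → (Fin r₁ → ℝ) → (Fin r₂ → ℝ) → ℝ)
    (hf_meas : Measurable (fun p : Bool × (Fin r₁ → ℝ) × (Fin r₂ → ℝ) => f p.1 p.2.1 p.2.2))
    (hf_pos : ∀ t x m, 0 < f t x m)
    (hlaw : P.map (fun ω => (T ω, X ω, M ω)) =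
      ((Measure.count : Measure Bool).prod
        ((volume : Measure (Fin r₁ → ℝ)).prod (volume : Measure (Fin r₂ → ℝ)))).withDensity
        (fun p => ENNReal.ofReal (f p.1 p.2.1 p.2.2)))
    -- conditional densities
    (fX : (Fin r₁ → ℝ) → ℝ)
    (hfX : ∀ x, fX x = (∫ m, f true x m) + (∫ m, f false x m))
    (fTX : Bool → (Fin r₁ → ℝ) → ℝ)
    (hfTX : ∀ t x, fTX t x = (∫ m, f t x m) / fX x)
    (fMTX : (Fin r₂ → ℝ) → Bool → (Fin r₁ → ℝ) → ℝ)
    (hfMTX : ∀ m t x, fMTX m t x = f t x m / (∫ m', f t x m'))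
    (fTMX : Bool → (Fin r₂ → ℝ) → (Fin r₁ → ℝ) → ℝ)
    (hfTMX : ∀ t m x, fTMX t m x = f t x m / fX x)
    -- the test function
    (v : (Fin r₁ → ℝ) → (Fin r₂ → ℝ) → ℝ) (hv : Measurable (Function.uncurry v)) :
    ∫ ω, (if T ω then 0
        else fMTX (M ω) true (X ω) / fTMX false (M ω) (X ω) * v (X ω) (M ω)) ∂P
      = ∫ ω, (if T ω then v (X ω) (M ω) / fTX true (X ω) else 0) ∂P := by
  let g₀ (p : Bool × (Fin r₁ → ℝ) × (Fin r₂ → ℝ)) : ℝ :=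
    if p.1 then 0 else fMTX p.2.2 true p.2.1 / fTMX false p.2.2 p.2.1 * v p.2.1 p.2.2
  let g₁ (p : Bool × (Fin r₁ → ℝ) × (Fin r₂ → ℝ)) : ℝ :=
    if p.1 then v p.2.1 p.2.2 / fTX true p.2.1 else 0
  have hf_slice (t : Bool) : Measurable fun y : (Fin r₁ → ℝ) × (Fin r₂ → ℝ) => f t y.1 y.2 :=
    hf_meas.comp (measurable_const.prodMk measurable_id)
  have hI (t : Bool) : Measurable fun y : (Fin r₁ → ℝ) × (Fin r₂ → ℝ) => ∫ m, f t y.1 m :=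
    (hf_slice t).stronglyMeasurable.integral_prod_right'.measurable.comp measurable_fst
  have hv' : Measurable fun y : (Fin r₁ → ℝ) × (Fin r₂ → ℝ) => v y.1 y.2 := hv
  have hg₀ : Measurable g₀ := measurable_from_prod_countable_right fun t => by
    cases t <;> simp only [g₀, hfMTX, hfTMX, hfX, Bool.false_eq_true, ↓reduceIte] <;> fun_prop
  have hg₁ : Measurable g₁ := measurable_from_prod_countable_right fun t => by
    cases t <;> simp only [g₁, hfTX, hfX, Bool.false_eq_true, ↓reduceIte] <;> fun_prop
  have hweight (p) : f p.1 p.2.1 p.2.2 * g₀ p = f (!p.1) p.2.1 p.2.2 * g₁ (!p.1, p.2) := by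
    rcases p with ⟨_ | _, x, m⟩
    · have := (hf_pos false x m).ne'
      simp only [g₀, g₁, hfMTX, hfTMX, hfTX, Bool.not_false, Bool.false_eq_true, ↓reduceIte]
      field_simp
    · simp [g₀, g₁]
  have hZ : AEMeasurable (fun ω => (T ω, X ω, M ω)) P := by fun_prop
  have hf_nonneg (p : Bool × (Fin r₁ → ℝ) × (Fin r₂ → ℝ)) := (hf_pos p.1 p.2.1 p.2.2).le
  let μ : Measure (Bool × (Fin r₁ → ℝ) × (Fin r₂ → ℝ)) := Measure.count.prod volume
  calc ∫ ω, g₀ (T ω, X ω, M ω) ∂P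
      = ∫ p, f p.1 p.2.1 p.2.2 * g₀ p ∂μ :=
        integral_comp_eq_integral_mul_of_map_eq_withDensity hZ hf_meas hf_nonneg hlaw hg₀
    _ = ∫ p : Bool × (Fin r₁ → ℝ) × (Fin r₂ → ℝ), f (!p.1) p.2.1 p.2.2 * g₁ (!p.1, p.2) ∂μ := by
        simp only [hweight]
    _ = ∫ p, f p.1 p.2.1 p.2.2 * g₁ p ∂μ :=
        integral_comp_not_fst_count_prod _ fun p => f p.1 p.2.1 p.2.2 * g₁ p
    _ = ∫ ω, g₁ (T ω, X ω, M ω) ∂P :=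
        (integral_comp_eq_integral_mul_of_map_eq_withDensity hZ hf_meas hf_nonneg hlaw hg₁).symm

/-- with `f_{T,M|X}(t,m|x) = f(t,x,m)/f_X(x)`, for every measurable `v` with
both sides integrable,
`E[(1−T)·(f_{M|T,X}(M|1,X)/f_{T,M|X}(0,M|X))·v(X,M)] = E[T·v(X,M)/f_{T|X}(1|X)]`. -/
theorem control_weighting_identity
    {Ω : Type*} [MeasurableSpace Ω] (P : Measure Ω) [IsProbabilityMeasure P]
    (r₁ r₂ : ℕ)
    (T : Ω → Bool) (X : Ω → (Fin r₁ → ℝ)) (M : Ω → (Fin r₂ → ℝ))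
    (hT : Measurable T) (hX : Measurable X) (hM : Measurable M)
    (f : Bool → (Fin r₁ → ℝ) → (Fin r₂ → ℝ) → ℝ)
    (hf_meas : Measurable (fun p : Bool × (Fin r₁ → ℝ) × (Fin r₂ → ℝ) => f p.1 p.2.1 p.2.2))
    (hf_pos : ∀ t x m, 0 < f t x m)
    (hlaw : P.map (fun ω => (T ω, X ω, M ω)) =
      ((Measure.count : Measure Bool).prod
        ((volume : Measure (Fin r₁ → ℝ)).prod (volume : Measure (Fin r₂ → ℝ)))).withDensity
        (fun p => ENNReal.ofReal (f p.1 p.2.1 p.2.2)))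
    -- conditional densities
    (fX : (Fin r₁ → ℝ) → ℝ)
    (hfX : ∀ x, fX x = (∫ m, f true x m) + (∫ m, f false x m))
    (fTX : Bool → (Fin r₁ → ℝ) → ℝ)
    (hfTX : ∀ t x, fTX t x = (∫ m, f t x m) / fX x)
    (fMTX : (Fin r₂ → ℝ) → Bool → (Fin r₁ → ℝ) → ℝ)
    (hfMTX : ∀ m t x, fMTX m t x = f t x m / (∫ m', f t x m'))
    (fTMX : Bool → (Fin r₂ → ℝ) → (Fin r₁ → ℝ) → ℝ)
    (hfTMX : ∀ t m x, fTMX t m x = f t x m / fX x)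
    -- the test function
    (v : (Fin r₁ → ℝ) → (Fin r₂ → ℝ) → ℝ) (hv : Measurable (Function.uncurry v))
    (hint1 : Integrable (fun ω =>
      if T ω then 0
      else fMTX (M ω) true (X ω) / fTMX false (M ω) (X ω) * v (X ω) (M ω)) P)
    (hint2 : Integrable (fun ω =>
      if T ω then v (X ω) (M ω) / fTX true (X ω) else 0) P) :
    ∫ ω, (if T ω then 0
        else fMTX (M ω) true (X ω) / fTMX false (M ω) (X ω) * v (X ω) (M ω)) ∂P
      = ∫ ω, (if T ω then v (X ω) (M ω) / fTX true (X ω) else 0) ∂P :=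
  control_weighting_identity_general P r₁ r₂ T X M hT hX hM f hf_meas hf_pos hlaw fX hfX fTX hfTX
    fMTX hfMTX fTMX hfTMX v hv
end

section
/- Let (Ω, ℱ, P) be a probability space carrying random variables T : Ω → {0,1}, X : Ω → ℝ^{r₁}, and potential outcomes Y₁, Y₀ : Ω → ℝ, and let the observed outcome be Y = T·Y₁ + (1−T)·Y₀. Assume: (i) the pair (Y₁, Y₀) is conditionally independent of T given the σ-algebra σ(X); (ii) e is a version of the conditional expectation E[T | σ(X)] with 0 < e < 1 almost surely; (iii) Y₁, Y₀, T·Y/e, and (1−T)·Y/(1−e) are integrable. Then E[Y₁] = E[ T·Y / e ] and E[Y₀] = E[ (1−T)·Y / (1−e) ]. -/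
/-! Let `A = {T = 1}` and `g = P(A | σ(X))`. Conditional independence of `Y₁` and `A` given `σ(X)`
gives `P(A ∩ B ∩ S) = ∫_{B ∩ S} g` for `B ∈ σ(Y₁)` and `S ∈ σ(X)`; these sets form a π-system
generating `σ(Y₁) ⊔ σ(X)`, so `P|_A` and the measure `g · P` agree on that σ-algebra. Integrating
the `σ(Y₁) ⊔ σ(X)`-measurable function `Y₁ / g` against both measures gives
`E[T Y₁ / g] = E[g · Y₁ / g] = E[Y₁]`. The control arm is the same argument for `1 - T`. -/

open MeasureTheory ProbabilityTheory

namespace MeasurableSpace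

open Set

variable {Ω : Type*}

lemma isPiSystem_image2_inter (m₁ m₂ : MeasurableSpace Ω) :
    IsPiSystem (image2 (· ∩ ·) {s | MeasurableSet[m₁] s} {t | MeasurableSet[m₂] t}) := by
  rintro _ ⟨s₁, hs₁, t₁, ht₁, rfl⟩ _ ⟨s₂, hs₂, t₂, ht₂, rfl⟩ -
  refine ⟨s₁ ∩ s₂, hs₁.inter hs₂, t₁ ∩ t₂, ht₁.inter ht₂, ?_⟩
  simp only [inter_inter_inter_comm]

lemma sup_eq_generateFrom_image2_inter (m₁ m₂ : MeasurableSpace Ω) :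
    m₁ ⊔ m₂ =
      generateFrom (image2 (· ∩ ·) {s | MeasurableSet[m₁] s} {t | MeasurableSet[m₂] t}) := by
  refine le_antisymm (sup_le (fun s hs ↦ ?_) (fun t ht ↦ ?_)) (generateFrom_le ?_)
  · exact measurableSet_generateFrom ⟨s, hs, univ, MeasurableSet.univ, inter_univ s⟩
  · exact measurableSet_generateFrom ⟨univ, MeasurableSet.univ, t, ht, univ_inter t⟩
  · rintro _ ⟨s, hs, t, ht, rfl⟩
    exact (le_sup_left (a := m₁) (b := m₂) s hs).inter (le_sup_right (a := m₁) (b := m₂) t ht)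

end MeasurableSpace

namespace ProbabilityTheory

open MeasurableSpace Set

lemma condExp_indicator_one_nonneg {Ω : Type*} (m : MeasurableSpace Ω) {mΩ : MeasurableSpace Ω}
    (P : Measure Ω) (A : Set Ω) :
    0 ≤ᵐ[P] P⟦A | m⟧ :=
  condExp_nonneg (ae_of_all _ (indicator_nonneg fun _ _ ↦ zero_le_one))

variable {Ω : Type*} {m m₁ m₂ mΩ : MeasurableSpace Ω} [StandardBorelSpace Ω] {hm : m ≤ mΩ}
  {P : Measure Ω} [IsFiniteMeasure P] {A : Set Ω}

lemma CondIndep.measureReal_inter_eq_setIntegral_condExp (hind : CondIndep m m₁ m₂ hm P)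
    (hm₁ : m₁ ≤ mΩ) (hm₂ : m₂ ≤ mΩ) (hA : MeasurableSet[m₂] A) {b s : Set Ω}
    (hb : MeasurableSet[m₁] b) (hs : MeasurableSet[m] s) :
    P.real (b ∩ s ∩ A) = ∫ ω in b ∩ s, (P⟦A | m⟧) ω ∂P := by
  have hbA_meas : MeasurableSet (b ∩ A) := (hm₁ b hb).inter (hm₂ A hA)
  have hbA : P⟦b ∩ A | m⟧ =ᵐ[P] P⟦b | m⟧ * P⟦A | m⟧ :=
    (condIndep_iff m m₁ m₂ hm hm₁ hm₂ P).1 hind b A hb hA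
  have hb_mul : b.indicator 1 * P⟦A | m⟧ = b.indicator (P⟦A | m⟧) := by
    ext ω
    by_cases hω : ω ∈ b <;> simp [hω]
  have hbg_int : Integrable (b.indicator 1 * P⟦A | m⟧) P :=
    hb_mul ▸ integrable_condExp.indicator (hm₁ b hb)
  have hbg : P[b.indicator 1 * P⟦A | m⟧ | m] =ᵐ[P] P⟦b | m⟧ * P⟦A | m⟧ :=
    condExp_mul_of_stronglyMeasurable_right stronglyMeasurable_condExp hbg_int
      ((integrable_const 1).indicator (hm₁ b hb))
  calc P.real (b ∩ s ∩ A)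
      = ∫ ω in s, (b ∩ A).indicator 1 ω ∂P := by
        rw [setIntegral_indicator hbA_meas]
        simp [inter_left_comm, inter_assoc]
    _ = ∫ ω in s, (P⟦b ∩ A | m⟧) ω ∂P :=
        (setIntegral_condExp hm ((integrable_const 1).indicator hbA_meas) hs).symm
    _ = ∫ ω in s, (P[b.indicator 1 * P⟦A | m⟧ | m]) ω ∂P :=
        setIntegral_congr_ae (hm s hs) ((hbA.trans hbg.symm).mono fun _ h _ ↦ h)
    _ = ∫ ω in s, (b.indicator 1 * P⟦A | m⟧ : Ω → ℝ) ω ∂P := setIntegral_condExp hm hbg_int hs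
    _ = ∫ ω in b ∩ s, (P⟦A | m⟧) ω ∂P := by
        rw [hb_mul, setIntegral_indicator (hm₁ b hb), inter_comm]

lemma CondIndep.restrict_apply_eq_withDensity_condExp (hind : CondIndep m m₁ m₂ hm P)
    (hm₁ : m₁ ≤ mΩ) (hm₂ : m₂ ≤ mΩ) (hA : MeasurableSet[m₂] A) {c : Set Ω}
    (hc : MeasurableSet[m₁ ⊔ m] c) :
    P.restrict A c = P.withDensity (fun ω ↦ ENNReal.ofReal ((P⟦A | m⟧) ω)) c := by
  have h_basic : ∀ b s, MeasurableSet[m₁] b → MeasurableSet[m] s →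
      P.restrict A (b ∩ s) = P.withDensity (fun ω ↦ ENNReal.ofReal ((P⟦A | m⟧) ω)) (b ∩ s) := by
    intro b s hb hs
    have hbs : MeasurableSet (b ∩ s) := (hm₁ b hb).inter (hm s hs)
    rw [Measure.restrict_apply hbs, withDensity_apply _ hbs,
      ← ofReal_integral_eq_lintegral_ofReal integrable_condExp.restrict
        (ae_restrict_of_ae (condExp_indicator_one_nonneg m P A)),
      ← hind.measureReal_inter_eq_setIntegral_condExp hm₁ hm₂ hA hb hs, ofReal_measureReal]
  refine ext_on_measurableSpace_of_generate_finite mΩ _ ?_ (sup_le hm₁ hm)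
    (sup_eq_generateFrom_image2_inter m₁ m) (isPiSystem_image2_inter m₁ m) ?_ hc
  · rintro _ ⟨b, hb, s, hs, rfl⟩
    exact h_basic b s hb hs
  · simpa using h_basic univ univ MeasurableSet.univ MeasurableSet.univ

lemma CondIndep.setIntegral_eq_integral_condExp_mul (hind : CondIndep m m₁ m₂ hm P)
    (hm₁ : m₁ ≤ mΩ) (hm₂ : m₂ ≤ mΩ) (hA : MeasurableSet[m₂] A) {φ : Ω → ℝ}
    (hφ : StronglyMeasurable[m₁ ⊔ m] φ) :
    ∫ ω in A, φ ω ∂P = ∫ ω, (P⟦A | m⟧) ω * φ ω ∂P := by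
  have hsup : m₁ ⊔ m ≤ mΩ := sup_le hm₁ hm
  have htrim : (P.restrict A).trim hsup
      = (P.withDensity fun ω ↦ ENNReal.ofReal ((P⟦A | m⟧) ω)).trim hsup := by
    refine @Measure.ext _ (m₁ ⊔ m) _ _ fun c hc ↦ ?_
    rw [trim_measurableSet_eq hsup hc, trim_measurableSet_eq hsup hc,
      hind.restrict_apply_eq_withDensity_condExp hm₁ hm₂ hA hc]
  rw [integral_trim hsup hφ, htrim, ← integral_trim hsup hφ,
    integral_withDensity_eq_integral_toReal_smul
      (stronglyMeasurable_condExp.measurable.mono hm le_rfl).ennreal_ofReal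
      (ae_of_all _ fun _ ↦ ENNReal.ofReal_lt_top)]
  exact integral_congr_ae ((condExp_indicator_one_nonneg m P A).mono fun ω hω ↦ by
    simp only [ENNReal.toReal_ofReal hω, smul_eq_mul])

lemma CondIndep.integral_eq_setIntegral_div_condExp (hind : CondIndep m m₁ m₂ hm P)
    (hm₁ : m₁ ≤ mΩ) (hm₂ : m₂ ≤ mΩ) (hA : MeasurableSet[m₂] A) {W : Ω → ℝ}
    (hW : Measurable[m₁] W) (hpos : ∀ᵐ ω ∂P, 0 < (P⟦A | m⟧) ω) :
    ∫ ω, W ω ∂P = ∫ ω in A, W ω / (P⟦A | m⟧) ω ∂P := by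
  have hg : Measurable[m₁ ⊔ m] (P⟦A | m⟧) :=
    stronglyMeasurable_condExp.measurable.mono le_sup_right le_rfl
  have hφ : StronglyMeasurable[m₁ ⊔ m] (W / P⟦A | m⟧) :=
    ((hW.mono le_sup_left le_rfl).div hg).stronglyMeasurable
  calc ∫ ω, W ω ∂P = ∫ ω, (P⟦A | m⟧) ω * (W / P⟦A | m⟧) ω ∂P :=
        integral_congr_ae (hpos.mono fun ω hω ↦ (mul_div_cancel₀ _ hω.ne').symm)
    _ = ∫ ω in A, W ω / (P⟦A | m⟧) ω ∂P :=
        (hind.setIntegral_eq_integral_condExp_mul hm₁ hm₂ hA hφ).symm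

lemma CondIndepFun.integral_eq_integral_mul_div_condExp {W D : Ω → ℝ} (hW : Measurable W)
    (hD : Measurable D) (hD_bin : ∀ ω, D ω = 0 ∨ D ω = 1) (hind : CondIndepFun m hm W D P)
    (hpos : ∀ᵐ ω ∂P, 0 < (P[D | m]) ω) :
    ∫ ω, W ω ∂P = ∫ ω, D ω * W ω / (P[D | m]) ω ∂P := by
  set A := D ⁻¹' {1}
  have hD_eq : D = A.indicator fun _ ↦ 1 :=
    funext fun ω ↦ by rcases hD_bin ω with h | h <;> simp [A, h]
  have hA : MeasurableSet[MeasurableSpace.comap D inferInstance] A :=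
    ⟨{1}, measurableSet_singleton 1, rfl⟩
  rw [hD_eq] at hpos ⊢
  rw [((condIndepFun_iff_condIndep m hm W D P).1 hind).integral_eq_setIntegral_div_condExp
      hW.comap_le hD.comap_le hA (comap_measurable W) hpos,
    ← integral_indicator (hD.comap_le A hA)]
  refine integral_congr_ae (ae_of_all _ fun ω ↦ ?_)
  by_cases hω : ω ∈ A
  · simp only [indicator_of_mem hω, one_mul]
  · simp only [indicator_of_notMem hω, zero_mul, zero_div]

end ProbabilityTheory

theorem ipw_identification_general
    {Ω : Type*} [MeasurableSpace Ω] [StandardBorelSpace Ω]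
    (P : Measure Ω) [IsProbabilityMeasure P]
    (r₁ : ℕ)
    (T : Ω → ℝ) (X : Ω → (Fin r₁ → ℝ)) (Y₁ Y₀ : Ω → ℝ)
    (hT : Measurable T) (hX : Measurable X) (hY₁ : Measurable Y₁) (hY₀ : Measurable Y₀)
    (hTbin : ∀ ω, T ω = 0 ∨ T ω = 1)
    (Y : Ω → ℝ) (hY : ∀ ω, Y ω = T ω * Y₁ ω + (1 - T ω) * Y₀ ω)
    -- (i) unconfoundedness: (Y₁, Y₀) ⫫ T | σ(X)
    (hindep : CondIndepFun (MeasurableSpace.comap X inferInstance) hX.comap_le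
      (fun ω => (Y₁ ω, Y₀ ω)) T P)
    -- (ii) e is a version of E[T | σ(X)] with 0 < e < 1 a.s.
    (e : Ω → ℝ)
    (he : e =ᵐ[P] P[T | MeasurableSpace.comap X inferInstance])
    (hpos : ∀ᵐ ω ∂P, 0 < e ω ∧ e ω < 1) :
    (∫ ω, Y₁ ω ∂P = ∫ ω, T ω * Y ω / e ω ∂P) ∧
    (∫ ω, Y₀ ω ∂P = ∫ ω, (1 - T ω) * Y ω / (1 - e ω) ∂P) := by
  set m := MeasurableSpace.comap X inferInstance
  have hT_int : Integrable T P := (integrable_const (1 : ℝ)).mono' hT.aestronglyMeasurable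
    (ae_of_all _ fun ω ↦ by rcases hTbin ω with h | h <;> simp [h])
  have he_compl : (fun ω ↦ 1 - e ω) =ᵐ[P] P[fun ω ↦ 1 - T ω | m] := by
    filter_upwards [he, condExp_sub (m := m) (integrable_const 1) hT_int] with ω h h_sub
    change 1 - e ω = P[(fun _ ↦ 1) - T | m] ω
    rw [h_sub, condExp_const hX.comap_le, Pi.sub_apply, h]
  have h₁ : CondIndepFun m hX.comap_le Y₁ T P := hindep.comp measurable_fst measurable_id
  have h₀ : CondIndepFun m hX.comap_le Y₀ (fun ω ↦ 1 - T ω) P :=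
    hindep.comp measurable_snd (measurable_const.sub measurable_id)
  constructor
  · rw [h₁.integral_eq_integral_mul_div_condExp hY₁ hT hTbin
      (by filter_upwards [hpos, he] with ω hω h; exact h ▸ hω.1)]
    refine integral_congr_ae (he.mono fun ω h ↦ ?_)
    rcases hTbin ω with hω | hω <;> simp [hY ω, hω, h]
  · rw [h₀.integral_eq_integral_mul_div_condExp (D := fun ω ↦ 1 - T ω) hY₀
      (measurable_const.sub hT)
      (fun ω ↦ by rcases hTbin ω with h | h <;> simp [h])
      (by filter_upwards [hpos, he_compl] with ω hω h; exact h ▸ sub_pos.2 hω.2)]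
    refine integral_congr_ae (he_compl.mono fun ω h ↦ ?_)
    dsimp only at h ⊢
    rw [← h]
    rcases hTbin ω with hω | hω <;> simp [hY ω, hω]

/-- under unconfoundedness and positivity, the average potential outcomes are
identified by inverse probability weighting:
`E[Y(1)] = E[T·Y/e(X)]` and `E[Y(0)] = E[(1−T)·Y/(1−e(X))]`. -/
theorem ipw_identification
    {Ω : Type*} [MeasurableSpace Ω] [StandardBorelSpace Ω] [Nonempty Ω]
    (P : Measure Ω) [IsProbabilityMeasure P]
    (r₁ : ℕ)
    (T : Ω → ℝ) (X : Ω → (Fin r₁ → ℝ)) (Y₁ Y₀ : Ω → ℝ)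
    (hT : Measurable T) (hX : Measurable X) (hY₁ : Measurable Y₁) (hY₀ : Measurable Y₀)
    (hTbin : ∀ ω, T ω = 0 ∨ T ω = 1)
    (Y : Ω → ℝ) (hY : ∀ ω, Y ω = T ω * Y₁ ω + (1 - T ω) * Y₀ ω)
    -- (i) unconfoundedness: (Y₁, Y₀) ⫫ T | σ(X)
    (hindep : CondIndepFun (MeasurableSpace.comap X inferInstance) hX.comap_le
      (fun ω => (Y₁ ω, Y₀ ω)) T P)
    -- (ii) e is a version of E[T | σ(X)] with 0 < e < 1 a.s.
    (e : Ω → ℝ)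
    (he : e =ᵐ[P] P[T | MeasurableSpace.comap X inferInstance])
    (hpos : ∀ᵐ ω ∂P, 0 < e ω ∧ e ω < 1)
    -- (iii) integrability
    (hY₁int : Integrable Y₁ P) (hY₀int : Integrable Y₀ P)
    (hint1 : Integrable (fun ω => T ω * Y ω / e ω) P)
    (hint0 : Integrable (fun ω => (1 - T ω) * Y ω / (1 - e ω)) P) :
    (∫ ω, Y₁ ω ∂P = ∫ ω, T ω * Y ω / e ω ∂P) ∧
    (∫ ω, Y₀ ω ∂P = ∫ ω, (1 - T ω) * Y ω / (1 - e ω) ∂P) :=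
  ipw_identification_general P r₁ T X Y₁ Y₀ hT hX hY₁ hY₀ hTbin Y hY hindep e he hpos
end

section
/- Let g : ℝ^{r₁} × ℝ^{r₂} → ℝ be a measurable version of the regression function of Y on (X, M) in the treated group (E[1{T=1} Y h(X,M)] = E[1{T=1} g(X,M) h(X,M)] for all bounded measurable h). Define η(x) = ∫_ℳ g(x, m) f_{M|T,X}(m|0,x) dm and θ₀ = ∫_𝒳 η(x) f_X(x) dx, and define the efficient influence function S = 1{T=1} · ( f_{M|T,X}(M|0,X) / ( f_{T|X}(1|X) f_{M|T,X}(M|1,X) ) ) · (Y − g(X,M)) + 1{T=0} / f_{T|X}(0|X) · ( g(X,M) − η(X) ) + η(X) − θ₀. Assume each of the three summands is integrable. Then E[S] = 0. -/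
/-!
The three summands of `S` have mean zero separately. The last one does because `θ₀` integrates
`η` against the marginal density of `X`. For the middle one, computed through the density of
`(T, X, M)`, the inner integral `∫ f(0,x,m) (g(x,m) - η(x)) dm` vanishes since `η(x)` is the
`f(0,x,·)`-weighted average of `g(x,·)`. The first one is the orthogonality of `Y - g(X,M)` to
functions of `(X,M)` on `{T = 1}`, extended from bounded test functions to the unbounded weight
`f(M|0,X) / (f(1|X) f(M|1,X))` by truncation and dominated convergence.
-/

open MeasureTheory Filter

section DensityTransfer

variable {Ω α : Type*} [MeasurableSpace Ω] [MeasurableSpace α] {P : Measure Ω} {ν : Measure α}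
  {φ : Ω → α} {D F : α → ℝ}

lemma integrable_mul_density_of_map_eq_withDensity (hφ : Measurable φ) (hD : Measurable D)
    (hD₀ : ∀ p, 0 ≤ D p) (hlaw : P.map φ = ν.withDensity fun p => ENNReal.ofReal (D p))
    (hF : Measurable F) (hFi : Integrable (fun ω => F (φ ω)) P) :
    Integrable (fun p => D p * F p) ν := by
  have hFi' := (integrable_map_measure hF.aestronglyMeasurable hφ.aemeasurable).2 hFi
  rw [hlaw, integrable_withDensity_iff hD.ennreal_ofReal
    (.of_forall fun _ => ENNReal.ofReal_lt_top)] at hFi'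
  simpa [ENNReal.toReal_ofReal (hD₀ _), mul_comm] using hFi'

lemma integral_comp_eq_integral_mul_density (hφ : Measurable φ) (hD : Measurable D)
    (hD₀ : ∀ p, 0 ≤ D p) (hlaw : P.map φ = ν.withDensity fun p => ENNReal.ofReal (D p))
    (hF : Measurable F) :
    ∫ ω, F (φ ω) ∂P = ∫ p, D p * F p ∂ν := by
  rw [← integral_map hφ.aemeasurable hF.aestronglyMeasurable, hlaw,
    integral_withDensity_eq_integral_toReal_smul hD.ennreal_ofReal
      (.of_forall fun _ => ENNReal.ofReal_lt_top)]
  simp [ENNReal.toReal_ofReal (hD₀ _)]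

end DensityTransfer

lemma integral_mul_sub_eq_zero_of_weighted_average {β : Type*} [MeasurableSpace β]
    {ν : Measure β} {φ ψ : β → ℝ} {a : ℝ} (ha : a = ∫ m, ψ m * (φ m / ∫ m', φ m' ∂ν) ∂ν)
    (hφ : ∫ m, φ m ∂ν ≠ 0) (hi : Integrable (fun m => φ m * (ψ m - a)) ν) :
    ∫ m, φ m * (ψ m - a) ∂ν = 0 := by
  have hφi : Integrable φ ν := .of_integral_ne_zero hφ
  have hφψ : Integrable (fun m => φ m * ψ m) ν :=
    (hi.add (hφi.mul_const a)).congr (.of_forall fun m => by simp only [Pi.add_apply]; ring)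
  have ha' : ∫ m, φ m * ψ m ∂ν = a * ∫ m, φ m ∂ν := by
    simp_rw [ha, ← mul_div_assoc, integral_div, div_mul_cancel₀ _ hφ, mul_comm]
  calc ∫ m, φ m * (ψ m - a) ∂ν = ∫ m, φ m * ψ m ∂ν - a * ∫ m, φ m ∂ν := by
        simp_rw [mul_sub]
        rw [integral_sub hφψ (hφi.mul_const a), integral_mul_const, mul_comm]
    _ = 0 := by rw [ha', sub_self]

section TreatmentCovariateMediator

variable {Ω α β : Type*} [MeasurableSpace Ω] [MeasurableSpace α] [MeasurableSpace β]
  {P : Measure Ω} {μ : Measure α} {ν : Measure β} [SFinite μ] [SFinite ν]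
  {T : Ω → Bool} {X : Ω → α} {M : Ω → β} {f F : Bool → α → β → ℝ}

lemma integrable_mul_density_of_law_eq_withDensity (hT : Measurable T) (hX : Measurable X)
    (hM : Measurable M) (hf : Measurable fun p : Bool × α × β => f p.1 p.2.1 p.2.2)
    (hf₀ : ∀ t x m, 0 ≤ f t x m)
    (hlaw : P.map (fun ω => (T ω, X ω, M ω)) = (Measure.count.prod (μ.prod ν)).withDensity
      fun p => ENNReal.ofReal (f p.1 p.2.1 p.2.2))
    (hF : Measurable fun p : Bool × α × β => F p.1 p.2.1 p.2.2)
    (hFi : Integrable (fun ω => F (T ω) (X ω) (M ω)) P) (t : Bool) :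
    Integrable (fun y : α × β => f t y.1 y.2 * F t y.1 y.2) (μ.prod ν) := by
  have h := integrable_mul_density_of_map_eq_withDensity (hT.prodMk (hX.prodMk hM)) hf
    (fun p => hf₀ _ _ _) hlaw hF hFi
  exact Measure.ae_count_iff.1 h.prod_right_ae t

lemma integral_comp_eq_integral_sum_integral_mul_density (hT : Measurable T)
    (hX : Measurable X) (hM : Measurable M)
    (hf : Measurable fun p : Bool × α × β => f p.1 p.2.1 p.2.2) (hf₀ : ∀ t x m, 0 ≤ f t x m)
    (hlaw : P.map (fun ω => (T ω, X ω, M ω)) = (Measure.count.prod (μ.prod ν)).withDensity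
      fun p => ENNReal.ofReal (f p.1 p.2.1 p.2.2))
    (hF : Measurable fun p : Bool × α × β => F p.1 p.2.1 p.2.2)
    (hFi : Integrable (fun ω => F (T ω) (X ω) (M ω)) P) :
    ∫ ω, F (T ω) (X ω) (M ω) ∂P = ∫ x, ∑ t, ∫ m, f t x m * F t x m ∂ν ∂μ := by
  have hφ := hT.prodMk (hX.prodMk hM)
  have hi := integrable_mul_density_of_law_eq_withDensity hT hX hM hf hf₀ hlaw hF hFi
  rw [integral_comp_eq_integral_mul_density hφ hf (fun p => hf₀ _ _ _) hlaw hF,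
    integral_prod _ (integrable_mul_density_of_map_eq_withDensity hφ hf (fun p => hf₀ _ _ _)
      hlaw hF hFi), integral_count, integral_finsetSum _ fun t _ => (hi t).integral_prod_left]
  exact Finset.sum_congr rfl fun t _ => integral_prod _ (hi t)

lemma integral_comp_eq_integral_mul_marginal_density (hT : Measurable T)
    (hX : Measurable X) (hM : Measurable M)
    (hf : Measurable fun p : Bool × α × β => f p.1 p.2.1 p.2.2) (hf₀ : ∀ t x m, 0 ≤ f t x m)
    (hlaw : P.map (fun ω => (T ω, X ω, M ω)) = (Measure.count.prod (μ.prod ν)).withDensity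
      fun p => ENNReal.ofReal (f p.1 p.2.1 p.2.2))
    {η : α → ℝ} (hη : Measurable η) (hηi : Integrable (fun ω => η (X ω)) P) :
    ∫ ω, η (X ω) ∂P = ∫ x, η x * ∑ t, ∫ m, f t x m ∂ν ∂μ := by
  rw [integral_comp_eq_integral_sum_integral_mul_density (F := fun _ x _ => η x) hT hX hM hf hf₀
    hlaw (hη.comp (measurable_fst.comp measurable_snd)) hηi]
  simp_rw [integral_mul_const, Finset.mul_sum, mul_comm]

/-- `hc` suffices because the integrand vanishes wherever `c x = 0` (`y / 0 = 0`). -/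
lemma integral_ite_zero_div_sub_weighted_average_eq_zero (hT : Measurable T)
    (hX : Measurable X) (hM : Measurable M)
    (hf : Measurable fun p : Bool × α × β => f p.1 p.2.1 p.2.2) (hf₀ : ∀ t x m, 0 ≤ f t x m)
    (hlaw : P.map (fun ω => (T ω, X ω, M ω)) = (Measure.count.prod (μ.prod ν)).withDensity
      fun p => ENNReal.ofReal (f p.1 p.2.1 p.2.2))
    {g : α → β → ℝ} {η c : α → ℝ} (hg : Measurable (Function.uncurry g))
    (hη_meas : Measurable η) (hc_meas : Measurable c)
    (hη : ∀ x, η x = ∫ m, g x m * (f false x m / ∫ m', f false x m' ∂ν) ∂ν)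
    (hc : ∀ x, c x ≠ 0 → ∫ m, f false x m ∂ν ≠ 0)
    (hi : Integrable (fun ω => if T ω then 0 else (g (X ω) (M ω) - η (X ω)) / c (X ω)) P) :
    ∫ ω, (if T ω then 0 else (g (X ω) (M ω) - η (X ω)) / c (X ω)) ∂P = 0 := by
  have hF : Measurable fun p : Bool × α × β =>
      if p.1 then 0 else (g p.2.1 p.2.2 - η p.2.1) / c p.2.1 :=
    Measurable.ite (measurable_fst (measurableSet_singleton true)) measurable_const
      (((hg.comp measurable_snd).sub (hη_meas.comp (measurable_fst.comp measurable_snd))).div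
        (hc_meas.comp (measurable_fst.comp measurable_snd)))
  rw [integral_comp_eq_integral_sum_integral_mul_density
    (F := fun t x m => if t then 0 else (g x m - η x) / c x) hT hX hM hf hf₀ hlaw hF hi]
  refine integral_eq_zero_of_ae ?_
  filter_upwards [(integrable_mul_density_of_law_eq_withDensity
    (F := fun t x m => if t then 0 else (g x m - η x) / c x) hT hX hM hf hf₀ hlaw hF hi
    false).prod_right_ae] with x hx
  simp only [Fintype.sum_bool, if_true, Bool.false_eq_true, if_false, mul_zero, integral_zero,
    zero_add, Pi.zero_apply] at hx ⊢
  by_cases hcx : c x = 0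
  · simp [hcx]
  simp_rw [← mul_div_assoc, integral_div]
  rw [integral_mul_sub_eq_zero_of_weighted_average (hη x) (hc x hcx), zero_div]
  exact (hx.mul_const (c x)).congr (.of_forall fun m => by field_simp)

end TreatmentCovariateMediator

lemma ite_zero_eq_indicator {Ω E : Type*} [Zero E] (T : Ω → Bool) (a : Ω → E) :
    (fun ω => if T ω then a ω else 0) = {ω | T ω}.indicator a := by
  ext ω
  by_cases h : T ω <;> simp [h]

section Regression

variable {Ω β : Type*} [MeasurableSpace Ω] [MeasurableSpace β] {P : Measure Ω}
  {T : Ω → Bool} {Z : Ω → β} {Y : Ω → ℝ} {g : β → ℝ}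

lemma integral_ite_mul_sub_eq_zero_of_bounded [IsFiniteMeasure P] (hT : Measurable T)
    (hZ : Measurable Z) (hY : Integrable Y P) (hg : Measurable g)
    (hreg : ∀ h : β → ℝ, Measurable h → (∃ C, ∀ p, |h p| ≤ C) →
      ∫ ω, (if T ω then Y ω * h (Z ω) else 0) ∂P
        = ∫ ω, (if T ω then g (Z ω) * h (Z ω) else 0) ∂P)
    {h : β → ℝ} (hh : Measurable h) {C C' : ℝ} (hC : ∀ p, |h p| ≤ C)
    (hC' : ∀ p, |g p * h p| ≤ C') :
    ∫ ω, (if T ω then h (Z ω) * (Y ω - g (Z ω)) else 0) ∂P = 0 := by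
  have hTs : MeasurableSet {ω | T ω} := hT (measurableSet_singleton true)
  have hYh : Integrable (fun ω => if T ω then Y ω * h (Z ω) else 0) P := by
    rw [ite_zero_eq_indicator]
    exact (hY.mul_bdd (hh.comp hZ).aestronglyMeasurable
      (.of_forall fun ω => hC (Z ω))).indicator hTs
  have hgh : Integrable (fun ω => if T ω then g (Z ω) * h (Z ω) else 0) P := by
    rw [ite_zero_eq_indicator]
    exact ((integrable_const C').mono' ((hg.mul hh).comp hZ).aestronglyMeasurable
      (.of_forall fun ω => hC' (Z ω))).indicator hTs
  calc ∫ ω, (if T ω then h (Z ω) * (Y ω - g (Z ω)) else 0) ∂P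
      = ∫ ω, ((if T ω then Y ω * h (Z ω) else 0) - if T ω then g (Z ω) * h (Z ω) else 0) ∂P := by
        congr with ω; split_ifs <;> ring
    _ = 0 := by rw [integral_sub hYh hgh, hreg h hh ⟨C, hC⟩, sub_self]

lemma integral_ite_mul_sub_eq_zero [IsFiniteMeasure P] (hT : Measurable T) (hZ : Measurable Z)
    (hY : Integrable Y P) (hg : Measurable g)
    (hreg : ∀ h : β → ℝ, Measurable h → (∃ C, ∀ p, |h p| ≤ C) →
      ∫ ω, (if T ω then Y ω * h (Z ω) else 0) ∂P
        = ∫ ω, (if T ω then g (Z ω) * h (Z ω) else 0) ∂P)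
    {w : β → ℝ} (hw : Measurable w)
    (hwi : Integrable (fun ω => if T ω then w (Z ω) * (Y ω - g (Z ω)) else 0) P) :
    ∫ ω, (if T ω then w (Z ω) * (Y ω - g (Z ω)) else 0) ∂P = 0 := by
  -- Truncating where `|g|` is large as well keeps `g * trunc n` bounded, as needed for `hreg`.
  set trunc : ℕ → β → ℝ := fun n p => if |w p| ≤ n ∧ |g p| ≤ n then w p else 0 with htrunc
  have trunc_meas (n : ℕ) : Measurable (trunc n) :=
    Measurable.ite ((measurableSet_le hw.abs measurable_const).inter
      (measurableSet_le hg.abs measurable_const)) hw measurable_const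
  have trunc_le (n : ℕ) (p : β) :
      |trunc n p| ≤ n ∧ |g p * trunc n p| ≤ n * n ∧ |trunc n p| ≤ |w p| := by
    by_cases hp : |w p| ≤ n ∧ |g p| ≤ n
    · simp only [htrunc, if_pos hp, abs_mul]
      exact ⟨hp.1, mul_le_mul hp.2 hp.1 (abs_nonneg _) (Nat.cast_nonneg n), le_rfl⟩
    · simp [htrunc, if_neg hp, mul_self_nonneg]
  have trunc_eventually_eq (p : β) : ∀ᶠ n : ℕ in atTop, trunc n p = w p := by
    obtain ⟨N, hN⟩ := exists_nat_ge (max |w p| |g p|)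
    filter_upwards [eventually_ge_atTop N] with n hn
    have hNn : max |w p| |g p| ≤ n := hN.trans (Nat.cast_le.2 hn)
    exact if_pos (max_le_iff.1 hNn)
  have hlim := tendsto_integral_of_dominated_convergence
    (F := fun n ω => if T ω then trunc n (Z ω) * (Y ω - g (Z ω)) else 0)
    (f := fun ω => if T ω then w (Z ω) * (Y ω - g (Z ω)) else 0) _
    (fun n => by
      rw [ite_zero_eq_indicator]
      exact (((trunc_meas n).comp hZ).aestronglyMeasurable.mul
        (hY.aestronglyMeasurable.sub (hg.comp hZ).aestronglyMeasurable)).indicator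
        (hT (measurableSet_singleton true)))
    hwi.norm
    (fun n => .of_forall fun ω => by
      by_cases h : T ω
      · simpa [h, abs_mul] using
          mul_le_mul_of_nonneg_right (trunc_le n (Z ω)).2.2 (abs_nonneg (Y ω - g (Z ω)))
      · simp [h])
    (.of_forall fun ω => tendsto_const_nhds.congr' <| (trunc_eventually_eq (Z ω)).mono
      fun n hn => by simp only [hn])
  refine tendsto_nhds_unique hlim ?_
  simp only [integral_ite_mul_sub_eq_zero_of_bounded hT hZ hY hg hreg (trunc_meas _)
    (fun p => (trunc_le _ p).1) (fun p => (trunc_le _ p).2.1), tendsto_const_nhds]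

end Regression

theorem eif_mean_zero_general
    {Ω : Type*} [MeasurableSpace Ω] (P : Measure Ω) [IsProbabilityMeasure P]
    (r₁ r₂ : ℕ)
    (T : Ω → Bool) (X : Ω → (Fin r₁ → ℝ)) (M : Ω → (Fin r₂ → ℝ)) (Y : Ω → ℝ)
    (hT : Measurable T) (hX : Measurable X) (hM : Measurable M)
    (hYint : Integrable Y P)
    -- the joint law of (T, X, M) has a strictly positive density f
    (f : Bool → (Fin r₁ → ℝ) → (Fin r₂ → ℝ) → ℝ)
    (hf_meas : Measurable (fun p : Bool × (Fin r₁ → ℝ) × (Fin r₂ → ℝ) => f p.1 p.2.1 p.2.2))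
    (hf_pos : ∀ t x m, 0 < f t x m)
    (hlaw : P.map (fun ω => (T ω, X ω, M ω)) =
      ((Measure.count : Measure Bool).prod
        ((volume : Measure (Fin r₁ → ℝ)).prod (volume : Measure (Fin r₂ → ℝ)))).withDensity
        (fun p => ENNReal.ofReal (f p.1 p.2.1 p.2.2)))
    -- conditional densities
    (fX : (Fin r₁ → ℝ) → ℝ)
    (hfX : ∀ x, fX x = (∫ m, f true x m) + (∫ m, f false x m))
    (fTX : Bool → (Fin r₁ → ℝ) → ℝ)
    (hfTX : ∀ t x, fTX t x = (∫ m, f t x m) / fX x)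
    (fMTX : (Fin r₂ → ℝ) → Bool → (Fin r₁ → ℝ) → ℝ)
    (hfMTX : ∀ m t x, fMTX m t x = f t x m / (∫ m', f t x m'))
    -- g is a measurable version of the regression function of Y on (X,M) among the treated
    (g : (Fin r₁ → ℝ) → (Fin r₂ → ℝ) → ℝ) (hg : Measurable (Function.uncurry g))
    (hreg : ∀ h : (Fin r₁ → ℝ) × (Fin r₂ → ℝ) → ℝ, Measurable h → (∃ C, ∀ p, |h p| ≤ C) →
      ∫ ω, (if T ω then Y ω * h (X ω, M ω) else 0) ∂P
        = ∫ ω, (if T ω then g (X ω) (M ω) * h (X ω, M ω) else 0) ∂P)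
    -- η and θ₀
    (η : (Fin r₁ → ℝ) → ℝ) (hη : ∀ x, η x = ∫ m, g x m * fMTX m false x)
    (θ₀ : ℝ) (hθ₀ : θ₀ = ∫ x, η x * fX x)
    -- the efficient influence function
    (S : Ω → ℝ)
    (hS : ∀ ω, S ω =
      (if T ω then
        fMTX (M ω) false (X ω) / (fTX true (X ω) * fMTX (M ω) true (X ω))
          * (Y ω - g (X ω) (M ω))
      else 0)
      + (if T ω then 0 else (g (X ω) (M ω) - η (X ω)) / fTX false (X ω))
      + (η (X ω) - θ₀))
    -- each of the three summands is integrable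
    (hint1 : Integrable (fun ω =>
      if T ω then
        fMTX (M ω) false (X ω) / (fTX true (X ω) * fMTX (M ω) true (X ω))
          * (Y ω - g (X ω) (M ω))
      else 0) P)
    (hint2 : Integrable (fun ω =>
      if T ω then 0 else (g (X ω) (M ω) - η (X ω)) / fTX false (X ω)) P)
    (hint3 : Integrable (fun ω => η (X ω) - θ₀) P) :
    ∫ ω, S ω ∂P = 0 := by
  have hI (t : Bool) : Measurable fun x => ∫ m, f t x m :=
    (hf_meas.comp measurable_prodMk_left).stronglyMeasurable.integral_prod_right'.measurable
  have hfX_meas : Measurable fX := funext hfX ▸ (hI true).add (hI false)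
  have hfTX_meas (t : Bool) : Measurable (fTX t) := funext (hfTX t) ▸ (hI t).div hfX_meas
  have hfMTX_meas (t : Bool) :
      Measurable fun y : (Fin r₁ → ℝ) × (Fin r₂ → ℝ) => fMTX y.2 t y.1 := by
    simp only [hfMTX]
    exact (hf_meas.comp measurable_prodMk_left).div ((hI t).comp measurable_fst)
  have hη_meas : Measurable η := funext hη ▸
    ((hg.mul (hfMTX_meas false)).stronglyMeasurable.integral_prod_right').measurable
  have hA := integral_ite_mul_sub_eq_zero (Z := fun ω => (X ω, M ω)) (g := Function.uncurry g)
    (w := fun p => fMTX p.2 false p.1 / (fTX true p.1 * fMTX p.2 true p.1))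
    hT (hX.prodMk hM) hYint hg hreg
    ((hfMTX_meas false).div (((hfTX_meas true).comp measurable_fst).mul (hfMTX_meas true))) hint1
  have hf₀ (t x m) : 0 ≤ f t x m := (hf_pos t x m).le
  have hB := integral_ite_zero_div_sub_weighted_average_eq_zero hT hX hM hf_meas hf₀ hlaw hg
    hη_meas (hfTX_meas false) (fun x => by simp_rw [hη, hfMTX])
    (fun x hx h => hx (by rw [hfTX, h, zero_div])) hint2
  have hηX : Integrable (fun ω => η (X ω)) P :=
    (hint3.add (integrable_const θ₀)).congr (.of_forall fun ω => sub_add_cancel _ _)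
  have hC : ∫ ω, η (X ω) ∂P = θ₀ := by
    rw [integral_comp_eq_integral_mul_marginal_density hT hX hM hf_meas hf₀ hlaw hη_meas hηX, hθ₀]
    simp [hfX]
  simp only [Function.uncurry_apply_pair] at hA
  simp_rw [hS]
  rw [integral_add (hint1.fun_add hint2) hint3, integral_add hint1 hint2, hA, hB,
    integral_sub hηX (integrable_const θ₀), hC]
  simp

/-- the efficient influence function `S_{θ₀}` has mean zero:
`E[1{T=1}·(f_{M|T,X}(M|0,X)/(f_{T|X}(1|X) f_{M|T,X}(M|1,X)))·(Y − g(X,M))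
  + 1{T=0}/f_{T|X}(0|X)·(g(X,M) − η(X)) + η(X) − θ₀] = 0`. -/
theorem eif_mean_zero
    {Ω : Type*} [MeasurableSpace Ω] (P : Measure Ω) [IsProbabilityMeasure P]
    (r₁ r₂ : ℕ)
    (T : Ω → Bool) (X : Ω → (Fin r₁ → ℝ)) (M : Ω → (Fin r₂ → ℝ)) (Y : Ω → ℝ)
    (hT : Measurable T) (hX : Measurable X) (hM : Measurable M) (hY : Measurable Y)
    (hYint : Integrable Y P)
    -- the joint law of (T, X, M) has a strictly positive density f
    (f : Bool → (Fin r₁ → ℝ) → (Fin r₂ → ℝ) → ℝ)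
    (hf_meas : Measurable (fun p : Bool × (Fin r₁ → ℝ) × (Fin r₂ → ℝ) => f p.1 p.2.1 p.2.2))
    (hf_pos : ∀ t x m, 0 < f t x m)
    (hlaw : P.map (fun ω => (T ω, X ω, M ω)) =
      ((Measure.count : Measure Bool).prod
        ((volume : Measure (Fin r₁ → ℝ)).prod (volume : Measure (Fin r₂ → ℝ)))).withDensity
        (fun p => ENNReal.ofReal (f p.1 p.2.1 p.2.2)))
    -- conditional densities
    (fX : (Fin r₁ → ℝ) → ℝ)
    (hfX : ∀ x, fX x = (∫ m, f true x m) + (∫ m, f false x m))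
    (fTX : Bool → (Fin r₁ → ℝ) → ℝ)
    (hfTX : ∀ t x, fTX t x = (∫ m, f t x m) / fX x)
    (fMTX : (Fin r₂ → ℝ) → Bool → (Fin r₁ → ℝ) → ℝ)
    (hfMTX : ∀ m t x, fMTX m t x = f t x m / (∫ m', f t x m'))
    -- g is a measurable version of the regression function of Y on (X,M) among the treated
    (g : (Fin r₁ → ℝ) → (Fin r₂ → ℝ) → ℝ) (hg : Measurable (Function.uncurry g))
    (hreg : ∀ h : (Fin r₁ → ℝ) × (Fin r₂ → ℝ) → ℝ, Measurable h → (∃ C, ∀ p, |h p| ≤ C) →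
      ∫ ω, (if T ω then Y ω * h (X ω, M ω) else 0) ∂P
        = ∫ ω, (if T ω then g (X ω) (M ω) * h (X ω, M ω) else 0) ∂P)
    -- η and θ₀
    (η : (Fin r₁ → ℝ) → ℝ) (hη : ∀ x, η x = ∫ m, g x m * fMTX m false x)
    (θ₀ : ℝ) (hθ₀ : θ₀ = ∫ x, η x * fX x)
    -- the efficient influence function
    (S : Ω → ℝ)
    (hS : ∀ ω, S ω =
      (if T ω then
        fMTX (M ω) false (X ω) / (fTX true (X ω) * fMTX (M ω) true (X ω))
          * (Y ω - g (X ω) (M ω))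
      else 0)
      + (if T ω then 0 else (g (X ω) (M ω) - η (X ω)) / fTX false (X ω))
      + (η (X ω) - θ₀))
    -- each of the three summands is integrable
    (hint1 : Integrable (fun ω =>
      if T ω then
        fMTX (M ω) false (X ω) / (fTX true (X ω) * fMTX (M ω) true (X ω))
          * (Y ω - g (X ω) (M ω))
      else 0) P)
    (hint2 : Integrable (fun ω =>
      if T ω then 0 else (g (X ω) (M ω) - η (X ω)) / fTX false (X ω)) P)
    (hint3 : Integrable (fun ω => η (X ω) - θ₀) P) :
    ∫ ω, S ω ∂P = 0 :=
  eif_mean_zero_general P r₁ r₂ T X M Y hT hX hM hYint f hf_meas hf_pos hlaw fX hfX fTX hfTX fMTX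
    hfMTX g hg hreg η hη θ₀ hθ₀ S hS hint1 hint2 hint3
end
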